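/- arXiv:2403.13531 — 7 statements merged into one kernel-verified Lean document; each statement's English description precedes it below -/
import Mathlib

section
/- Let Y be an n-parameter yield curve model on an open set O ⊆ ℝ^n satisfying SPA with static price flow φ. Then there exist an open subset Õ of ℝ^{1+n} with [0,∞) × O ⊆ Õ ⊆ ℝ × O and a smooth map φ̃ : Õ → O extending φ such that for all t ≥ 0, h ≥ 0 and r ∈ O with (−h, r) ∈ Õ and t − h ≥ 0: Y_{t−h}(r) = Y_t(φ̃_{−h}(r)), L_{t−h}(r) = L_t(φ̃_{−h}(r)) − L_h(φ̃_{−h}(r)), and P_{t−h}(r) = P_t(φ̃_{−h}(r))/P_h(φ̃_{−h}(r)). -/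
open Real Set Topology

/-- The log-price `L_t(r) = ∫₀ᵗ Y_s(r) ds` of a yield curve model. -/
noncomputable def logPrice {n : ℕ} (Y : ℝ → (Fin n → ℝ) → ℝ) (t : ℝ) (r : Fin n → ℝ) : ℝ :=
  ∫ s in (0:ℝ)..t, Y s r

/-- The price `P_t(r) = exp (−L_t(r))` of a yield curve model. -/
noncomputable def price {n : ℕ} (Y : ℝ → (Fin n → ℝ) → ℝ) (t : ℝ) (r : Fin n → ℝ) : ℝ :=
  Real.exp (- logPrice Y t r)

/-- An `n`-parameter yield curve model on a nonempty open set `O ⊆ ℝⁿ`: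
a smooth positive function `Y_t(r)` for `t ≥ 0`, `r ∈ O`, injective as a map
from parameters to yield curves. -/
structure IsYCModel {n : ℕ} (O : Set (Fin n → ℝ)) (Y : ℝ → (Fin n → ℝ) → ℝ) : Prop where
  isOpen : IsOpen O
  nonempty : O.Nonempty
  smooth : ContDiffOn ℝ (⊤ : ℕ∞) (fun p : ℝ × (Fin n → ℝ) => Y p.1 p.2) (Set.Ici 0 ×ˢ O)
  pos : ∀ t, 0 ≤ t → ∀ r ∈ O, 0 < Y t r
  inj : ∀ r ∈ O, ∀ r' ∈ O, (∀ t, 0 ≤ t → Y t r = Y t r') → r = r'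

/-- `φ` is a static price flow for the model `Y` (condition SPA):
a smooth map `φ : [0,∞) × O → O` with `Y_t(φ_h(r)) = Y_{t+h}(r)`. -/
structure IsStaticPriceFlow {n : ℕ} (O : Set (Fin n → ℝ)) (Y : ℝ → (Fin n → ℝ) → ℝ)
    (φ : ℝ → (Fin n → ℝ) → (Fin n → ℝ)) : Prop where
  smooth : ContDiffOn ℝ (⊤ : ℕ∞) (fun p : ℝ × (Fin n → ℝ) => φ p.1 p.2) (Set.Ici 0 ×ˢ O)
  mapsTo : ∀ h, 0 ≤ h → ∀ r ∈ O, φ h r ∈ O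
  flow : ∀ t, 0 ≤ t → ∀ h, 0 ≤ h → ∀ r ∈ O, Y t (φ h r) = Y (t + h) r

/-- A bundle of futures: a finitely supported function `x : [0,∞) → ℝ` with `x₀ = 0`
(extended by `0` to negative times). -/
def IsBundle (x : ℝ → ℝ) : Prop :=
  (Function.support x).Finite ∧ x 0 = 0 ∧ ∀ t, t < 0 → x t = 0

/-- `x` is self-financing at `r`: its present value `∑_t P_t(r) x_t` is zero. -/
noncomputable def SelfFinancing {n : ℕ} (Y : ℝ → (Fin n → ℝ) → ℝ) (x : ℝ → ℝ)
    (r : Fin n → ℝ) : Prop :=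
  ∑ᶠ t, price Y t r * x t = 0

/-- `x` is a null investment at `r`: for all `(h, r')` in some neighborhood
`[0,ε) × U` of `(0, r)` with `[0,ε] ∩ supp x = ∅`, `∑_t P_{t-h}(r') x_t = 0`. -/
def NullInvestment {n : ℕ} (O : Set (Fin n → ℝ)) (Y : ℝ → (Fin n → ℝ) → ℝ)
    (x : ℝ → ℝ) (r : Fin n → ℝ) : Prop :=
  ∃ ε > (0:ℝ), (∀ t ∈ Set.Icc (0:ℝ) ε, x t = 0) ∧
    ∃ U : Set (Fin n → ℝ), IsOpen U ∧ r ∈ U ∧ U ⊆ O ∧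
      ∀ h ∈ Set.Ico (0:ℝ) ε, ∀ r' ∈ U, ∑ᶠ t, price Y (t - h) r' * x t = 0

/-- `x` is a local arbitrage at `r`: self-financing at `r`, and for all `(h, r')`
in some neighborhood `[0,ε) × U` of `(0, r)` with `[0,ε] ∩ supp x = ∅`,
`∑_t P_{t-h}(r') x_t ≥ 0`. -/
def LocalArbitrage {n : ℕ} (O : Set (Fin n → ℝ)) (Y : ℝ → (Fin n → ℝ) → ℝ)
    (x : ℝ → ℝ) (r : Fin n → ℝ) : Prop :=
  SelfFinancing Y x r ∧
    ∃ ε > (0:ℝ), (∀ t ∈ Set.Icc (0:ℝ) ε, x t = 0) ∧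
      ∃ U : Set (Fin n → ℝ), IsOpen U ∧ r ∈ U ∧ U ⊆ O ∧
        ∀ h ∈ Set.Ico (0:ℝ) ε, ∀ r' ∈ U, 0 ≤ ∑ᶠ t, price Y (t - h) r' * x t

/-- Condition NLA (no local arbitrage): the zero bundle is the only local
arbitrage at any parameter value. -/
def NLA {n : ℕ} (O : Set (Fin n → ℝ)) (Y : ℝ → (Fin n → ℝ) → ℝ) : Prop :=
  ∀ r ∈ O, ∀ x : ℝ → ℝ, IsBundle x → LocalArbitrage O Y x r → x = 0

namespace SPFExt

open Metric Filter Classical NNReal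

set_option linter.unusedSectionVars false

variable {n : ℕ}

/-- The full flow map as a function of a pair. -/
def Phi (φ : ℝ → (Fin n → ℝ) → (Fin n → ℝ)) (p : ℝ × (Fin n → ℝ)) : Fin n → ℝ := φ p.1 p.2

/-- The partial derivative of the flow in the space direction. -/
noncomputable def Dmap (O : Set (Fin n → ℝ)) (φ : ℝ → (Fin n → ℝ) → (Fin n → ℝ))
    (p : ℝ × (Fin n → ℝ)) : (Fin n → ℝ) →L[ℝ] (Fin n → ℝ) :=
  (fderivWithin ℝ (Phi φ) (Set.Ici 0 ×ˢ O) p).comp (ContinuousLinearMap.inr ℝ ℝ (Fin n → ℝ))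

/-- Admissible radius at `r`. -/
def adm (O : Set (Fin n → ℝ)) (φ : ℝ → (Fin n → ℝ) → (Fin n → ℝ)) (r : Fin n → ℝ) (δ : ℝ) :
    Prop :=
  0 < δ ∧ δ ≤ 1 ∧ closedBall r δ ⊆ O ∧
    ∀ h ∈ Icc (0:ℝ) δ, ∀ ρ ∈ closedBall r δ,
      ‖Dmap O φ (h, ρ) - ContinuousLinearMap.id ℝ (Fin n → ℝ)‖ ≤ 1/2

noncomputable def Rad (O : Set (Fin n → ℝ)) (φ : ℝ → (Fin n → ℝ) → (Fin n → ℝ))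
    (r : Fin n → ℝ) : ℝ :=
  sSup {δ | adm O φ r δ}

def spec (O : Set (Fin n → ℝ)) (φ : ℝ → (Fin n → ℝ) → (Fin n → ℝ)) (h : ℝ)
    (r ρ : Fin n → ℝ) : Prop :=
  ρ ∈ O ∧ φ h ρ = r ∧ dist ρ r ≤ 2 * dist (φ h r) r

noncomputable def Fb (O : Set (Fin n → ℝ)) (φ : ℝ → (Fin n → ℝ) → (Fin n → ℝ)) (h : ℝ)
    (r : Fin n → ℝ) : Fin n → ℝ :=
  if H : ∃ ρ, spec O φ h r ρ then H.choose else r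

def Good (O : Set (Fin n → ℝ)) (φ : ℝ → (Fin n → ℝ) → (Fin n → ℝ)) : Set (ℝ × (Fin n → ℝ)) :=
  {p | p.2 ∈ O ∧ 0 ≤ p.1 ∧ p.1 < Rad O φ p.2 ∧ 4 * dist (φ p.1 p.2) p.2 < Rad O φ p.2}

variable {O : Set (Fin n → ℝ)} {Y : ℝ → (Fin n → ℝ) → ℝ}
  {φ : ℝ → (Fin n → ℝ) → (Fin n → ℝ)}

section Basic

variable (hY : IsYCModel O Y) (hφ : IsStaticPriceFlow O Y φ)
include hY hφ

lemma phi_zero {r : Fin n → ℝ} (hr : r ∈ O) : φ 0 r = r := by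
  refine hY.inj _ (hφ.mapsTo 0 le_rfl r hr) r hr fun t ht => ?_
  rw [hφ.flow t ht 0 le_rfl r hr, add_zero]

lemma phi_add {s h : ℝ} {r : Fin n → ℝ} (hs : 0 ≤ s) (hh : 0 ≤ h) (hr : r ∈ O) :
    φ s (φ h r) = φ (s + h) r := by
  have h1 : φ h r ∈ O := hφ.mapsTo h hh r hr
  have h2 : φ (s + h) r ∈ O := hφ.mapsTo (s + h) (by linarith) r hr
  refine hY.inj _ (hφ.mapsTo s hs _ h1) _ h2 fun t ht => ?_
  rw [hφ.flow t ht s hs _ h1, hφ.flow (t + s) (by linarith) h hh r hr,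
    hφ.flow t ht (s + h) (by linarith) r hr, add_assoc]

lemma uDiff : UniqueDiffOn ℝ ((Set.Ici (0:ℝ)) ×ˢ O) :=
  (uniqueDiffOn_Ici 0).prod hY.isOpen.uniqueDiffOn

lemma slice_hasFDerivAt {h : ℝ} {r : Fin n → ℝ} (hh : 0 ≤ h) (hr : r ∈ O) :
    HasFDerivAt (fun ρ => φ h ρ) (Dmap O φ (h, r)) r := by
  have hmem : ((h, r) : ℝ × (Fin n → ℝ)) ∈ (Set.Ici (0:ℝ)) ×ˢ O := ⟨hh, hr⟩
  have hdiff : DifferentiableWithinAt ℝ (Phi φ) ((Set.Ici (0:ℝ)) ×ˢ O) (h, r) :=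
    (hφ.smooth.differentiableOn (by simp)) _ hmem
  have hΦ := hdiff.hasFDerivWithinAt
  have hj : HasFDerivAt (fun ρ : Fin n → ℝ => ((h, ρ) : ℝ × (Fin n → ℝ)))
      (ContinuousLinearMap.inr ℝ ℝ (Fin n → ℝ)) r := by
    have h0 : HasFDerivAt (fun ρ : Fin n → ℝ => ((h, ρ) : ℝ × (Fin n → ℝ)))
        ((0 : (Fin n → ℝ) →L[ℝ] ℝ).prod (ContinuousLinearMap.id ℝ (Fin n → ℝ))) r :=
      (hasFDerivAt_const h r).prodMk (hasFDerivAt_id r)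
    exact h0
  have hmaps : Set.MapsTo (fun ρ : Fin n → ℝ => ((h, ρ) : ℝ × (Fin n → ℝ))) O
      ((Set.Ici (0:ℝ)) ×ˢ O) := fun ρ hρ => ⟨hh, hρ⟩
  have hcomp := hΦ.comp r hj.hasFDerivWithinAt hmaps
  exact hcomp.hasFDerivAt (hY.isOpen.mem_nhds hr)

lemma Dmap_cont : ContinuousOn (Dmap O φ) ((Set.Ici (0:ℝ)) ×ˢ O) := by
  have h1 := hφ.smooth.continuousOn_fderivWithin (uDiff hY hφ) (by simp)
  exact h1.clm_comp continuousOn_const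

lemma Dmap_zero {r : Fin n → ℝ} (hr : r ∈ O) :
    Dmap O φ (0, r) = ContinuousLinearMap.id ℝ (Fin n → ℝ) := by
  have h1 := slice_hasFDerivAt hY hφ le_rfl hr
  have h2 : HasFDerivAt (fun ρ => φ 0 ρ) (ContinuousLinearMap.id ℝ (Fin n → ℝ)) r := by
    refine (hasFDerivAt_id r).congr_of_eventuallyEq ?_
    filter_upwards [hY.isOpen.mem_nhds hr] with ρ hρ using phi_zero hY hφ hρ
  exact h1.unique h2

omit hY hφ in
lemma adm_mono {r : Fin n → ℝ} {δ δ' : ℝ} (ha : adm O φ r δ) (h0 : 0 < δ') (hle : δ' ≤ δ) :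
    adm O φ r δ' := by
  refine ⟨h0, hle.trans ha.2.1, (closedBall_subset_closedBall hle).trans ha.2.2.1,
    fun h hh ρ hρ => ha.2.2.2 h ⟨hh.1, hh.2.trans hle⟩ ρ (closedBall_subset_closedBall hle hρ)⟩

omit hY hφ in
lemma adm_bddAbove (r : Fin n → ℝ) : BddAbove {δ | adm O φ r δ} :=
  ⟨1, fun δ hδ => hδ.2.1⟩

lemma adm_exists {r : Fin n → ℝ} (hr : r ∈ O) : ∃ δ, adm O φ r δ := by
  have hmem : ((0:ℝ), r) ∈ (Set.Ici (0:ℝ)) ×ˢ O := ⟨Set.self_mem_Ici, hr⟩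
  have hcont := (Dmap_cont hY hφ) _ hmem
  have hop : IsOpen {A : (Fin n → ℝ) →L[ℝ] (Fin n → ℝ) |
      ‖A - ContinuousLinearMap.id ℝ (Fin n → ℝ)‖ < 1/2} :=
    isOpen_lt ((continuous_id.sub continuous_const).norm) continuous_const
  have hmem0 : Dmap O φ (0, r) ∈ {A : (Fin n → ℝ) →L[ℝ] (Fin n → ℝ) |
      ‖A - ContinuousLinearMap.id ℝ (Fin n → ℝ)‖ < 1/2} := by
    rw [Dmap_zero hY hφ hr]; simp
  have hev := hcont (hop.mem_nhds hmem0)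
  rw [Filter.mem_map, Metric.mem_nhdsWithin_iff] at hev
  obtain ⟨ε, hε, hsub⟩ := hev
  obtain ⟨ε', hε', hball⟩ := Metric.isOpen_iff.1 hY.isOpen r hr
  set δ₀ : ℝ := min (min (ε/2) (ε'/2)) 1 with hδ₀
  have hδ₀pos : 0 < δ₀ := by positivity
  have hδ₀ε : δ₀ ≤ ε/2 := le_trans (min_le_left _ _) (min_le_left _ _)
  have hδ₀ε' : δ₀ ≤ ε'/2 := le_trans (min_le_left _ _) (min_le_right _ _)
  have hδ₀1 : δ₀ ≤ 1 := min_le_right _ _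
  have hsubO : closedBall r δ₀ ⊆ O := by
    intro ρ hρ
    have h3 : dist ρ r ≤ δ₀ := mem_closedBall.1 hρ
    exact hball (mem_ball.2 (by linarith))
  refine ⟨δ₀, hδ₀pos, hδ₀1, hsubO, ?_⟩
  intro h hh ρ hρ
  have h3 : dist ρ r ≤ δ₀ := mem_closedBall.1 hρ
  have hd : dist ((h, ρ) : ℝ × (Fin n → ℝ)) (0, r) < ε := by
    rw [Prod.dist_eq]
    have h2 : dist h 0 ≤ δ₀ := by
      rw [Real.dist_eq, sub_zero, abs_of_nonneg hh.1]; exact hh.2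
    have : max (dist h 0) (dist ρ r) ≤ δ₀ := max_le h2 h3
    linarith
  have hmemW : ((h, ρ) : ℝ × (Fin n → ℝ)) ∈ (Set.Ici (0:ℝ)) ×ˢ O := ⟨hh.1, hsubO hρ⟩
  exact le_of_lt (hsub ⟨mem_ball.2 hd, hmemW⟩)

lemma Rad_pos {r : Fin n → ℝ} (hr : r ∈ O) : 0 < Rad O φ r := by
  obtain ⟨δ, hδ⟩ := adm_exists hY hφ hr
  exact lt_of_lt_of_le hδ.1 (le_csSup (adm_bddAbove r) hδ)

lemma adm_of_lt {r : Fin n → ℝ} {δ : ℝ} (hr : r ∈ O) (h0 : 0 < δ) (hlt : δ < Rad O φ r) :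
    adm O φ r δ := by
  have hne : {δ | adm O φ r δ}.Nonempty := (adm_exists hY hφ hr).imp fun _ h => h
  obtain ⟨δ', hδ', hlt'⟩ := exists_lt_of_lt_csSup hne hlt
  exact adm_mono hδ' h0 hlt'.le

lemma Rad_lip {r r' : Fin n → ℝ} (hr : r ∈ O) (hr' : r' ∈ O) :
    Rad O φ r - dist r r' ≤ Rad O φ r' := by
  rcases le_or_gt (Rad O φ r - dist r r') 0 with h | h
  · exact h.trans (Rad_pos hY hφ hr').le
  refine le_of_forall_lt fun c hc => ?_
  rcases le_or_gt c 0 with hc0 | hc0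
  · exact lt_of_le_of_lt hc0 (Rad_pos hY hφ hr')
  obtain ⟨δ, hδ1, hδ2⟩ := exists_between (show c + dist r r' < Rad O φ r by linarith)
  have hδd : dist r r' < δ := lt_of_le_of_lt (le_add_of_nonneg_left hc0.le) hδ1
  have ha : adm O φ r δ := adm_of_lt hY hφ hr (lt_of_le_of_lt dist_nonneg hδd) hδ2
  have ha' : adm O φ r' (δ - dist r r') := by
    have hd0 : (0:ℝ) ≤ dist r r' := dist_nonneg
    refine ⟨by linarith, by linarith [ha.2.1], ?_, ?_⟩
    · refine subset_trans ?_ ha.2.2.1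
      intro ρ hρ
      rw [mem_closedBall] at hρ ⊢
      calc dist ρ r ≤ dist ρ r' + dist r' r := dist_triangle _ _ _
        _ ≤ (δ - dist r r') + dist r r' := by rw [dist_comm r' r]; linarith
        _ = δ := by ring
    · intro h hh ρ hρ
      refine ha.2.2.2 h ⟨hh.1, by linarith [hh.2, dist_nonneg (x := r) (y := r')]⟩ ρ ?_
      rw [mem_closedBall] at hρ ⊢
      calc dist ρ r ≤ dist ρ r' + dist r' r := dist_triangle _ _ _
        _ ≤ (δ - dist r r') + dist r r' := by rw [dist_comm r' r]; linarith
        _ = δ := by ring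
  calc c < δ - dist r r' := by linarith
    _ ≤ Rad O φ r' := le_csSup (adm_bddAbove r') ha'

lemma approx {r : Fin n → ℝ} {δ h : ℝ} (ha : adm O φ r δ) (hh : h ∈ Icc (0:ℝ) δ) :
    ∀ x ∈ closedBall r δ, ∀ y ∈ closedBall r δ,
      ‖φ h x - φ h y - (x - y)‖ ≤ 1/2 * ‖x - y‖ := by
  intro x hx y hy
  have hg : ∀ ρ ∈ closedBall r δ, HasFDerivWithinAt (fun ρ => φ h ρ - ρ)
      (Dmap O φ (h, ρ) - ContinuousLinearMap.id ℝ (Fin n → ℝ)) (closedBall r δ) ρ :=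
    fun ρ hρ => ((slice_hasFDerivAt hY hφ hh.1 (ha.2.2.1 hρ)).sub
      (hasFDerivAt_id ρ)).hasFDerivWithinAt
  have hb := (convex_closedBall r δ).norm_image_sub_le_of_norm_hasFDerivWithin_le hg
    (fun ρ hρ => ha.2.2.2 h hh ρ hρ) hy hx
  calc ‖φ h x - φ h y - (x - y)‖ = ‖(φ h x - x) - (φ h y - y)‖ := by ring_nf
    _ ≤ 1/2 * ‖x - y‖ := hb

lemma injOn_ball {r : Fin n → ℝ} {δ h : ℝ} (ha : adm O φ r δ) (hh : h ∈ Icc (0:ℝ) δ) :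
    Set.InjOn (φ h) (closedBall r δ) := by
  intro x hx y hy he
  have h1 := approx hY hφ ha hh x hx y hy
  rw [he, sub_self, zero_sub, norm_neg] at h1
  have h2 := norm_nonneg (x - y)
  have h3 : ‖x - y‖ = 0 := by linarith
  exact sub_eq_zero.1 (norm_eq_zero.1 h3)

lemma apriori {r ρ : Fin n → ℝ} {δ h : ℝ} (ha : adm O φ r δ) (hh : h ∈ Icc (0:ℝ) δ)
    (hρ : ρ ∈ closedBall r δ) (he : φ h ρ = r) : dist ρ r ≤ 2 * dist (φ h r) r := by
  have h1 := approx hY hφ ha hh ρ hρ r (mem_closedBall_self ha.1.le)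
  rw [he] at h1
  have h2 : ‖ρ - r‖ - ‖r - φ h r‖ ≤ ‖r - φ h r - (ρ - r)‖ := by
    calc ‖ρ - r‖ - ‖r - φ h r‖ ≤ ‖(ρ - r) - (r - φ h r)‖ := norm_sub_norm_le _ _
      _ = ‖r - φ h r - (ρ - r)‖ := by rw [← norm_neg]; ring_nf
  rw [dist_eq_norm, dist_eq_norm]
  have h3 : ‖φ h r - r‖ = ‖r - φ h r‖ := norm_sub_rev _ _
  rw [h3]
  linarith

lemma good_delta {h : ℝ} {r : Fin n → ℝ} (hG : (h, r) ∈ Good O φ) :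
    adm O φ r (max h (Rad O φ r / 2)) ∧ h ∈ Icc (0:ℝ) (max h (Rad O φ r / 2)) ∧
      Rad O φ r / 2 ≤ max h (Rad O φ r / 2) := by
  obtain ⟨hrO, hh0, hhR, hdR⟩ := hG
  have hRpos : 0 < Rad O φ r := Rad_pos hY hφ hrO
  have h1 : 0 < max h (Rad O φ r / 2) := lt_max_of_lt_right (by linarith)
  have h2 : max h (Rad O φ r / 2) < Rad O φ r := max_lt hhR (by linarith)
  exact ⟨adm_of_lt hY hφ hrO h1 h2, ⟨hh0, le_max_left _ _⟩, le_max_right _ _⟩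

lemma spec_mem_ball {h : ℝ} {r ρ : Fin n → ℝ} (hG : (h, r) ∈ Good O φ)
    (hs : spec O φ h r ρ) : ρ ∈ closedBall r (max h (Rad O φ r / 2)) := by
  obtain ⟨hrO, hh0, hhR, hdR⟩ := hG
  have := hs.2.2
  rw [mem_closedBall]
  have h2 : Rad O φ r / 2 ≤ max h (Rad O φ r / 2) := le_max_right _ _
  simp only [Good, Set.mem_setOf_eq] at hdR ⊢
  linarith

lemma spec_unique {h : ℝ} {r ρ₁ ρ₂ : Fin n → ℝ} (hG : (h, r) ∈ Good O φ)
    (h₁ : spec O φ h r ρ₁) (h₂ : spec O φ h r ρ₂) : ρ₁ = ρ₂ := by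
  obtain ⟨ha, hhI, _⟩ := good_delta hY hφ hG
  exact injOn_ball hY hφ ha hhI (spec_mem_ball hY hφ hG h₁) (spec_mem_ball hY hφ hG h₂)
    (by rw [h₁.2.1, h₂.2.1])

lemma spec_exists {h : ℝ} {r : Fin n → ℝ} (hG : (h, r) ∈ Good O φ) :
    ∃ ρ, spec O φ h r ρ := by
  rcases subsingleton_or_nontrivial (Fin n → ℝ) with hsub | hnt
  · refine ⟨r, hG.1, ?_, ?_⟩
    · exact Subsingleton.elim _ _
    · have : dist r r = 0 := dist_self r
      have h2 : dist (φ h r) r = 0 := by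
        rw [Subsingleton.elim (φ h r) r]; exact dist_self r
      linarith [dist_nonneg (x := φ h r) (y := r)]
  obtain ⟨ha, hhI, hR2⟩ := good_delta hY hφ hG
  obtain ⟨hrO, hh0, hhR, hdR⟩ := hG
  set δ := max h (Rad O φ r / 2) with hδdef
  have happrox : ApproximatesLinearOn (φ h)
      ((ContinuousLinearEquiv.refl ℝ (Fin n → ℝ) : (Fin n → ℝ) ≃L[ℝ] (Fin n → ℝ)) :
        (Fin n → ℝ) →L[ℝ] (Fin n → ℝ)) (closedBall r δ) (1/2 : ℝ≥0) := by
    intro x hx y hy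
    have := approx hY hφ ha hhI x hx y hy
    simpa using this
  set rinv := (ContinuousLinearEquiv.refl ℝ (Fin n → ℝ)).toNonlinearRightInverse with hrinv
  have hnn : (rinv.nnnorm : ℝ) = 1 := by
    simp [hrinv, ContinuousLinearEquiv.toNonlinearRightInverse]
  have hsurj := happrox.surjOn_closedBall_of_nonlinearRightInverse rinv (le_of_lt ha.1)
    subset_rfl
  have hrad : ((rinv.nnnorm : ℝ)⁻¹ - (1/2 : ℝ≥0)) * δ = δ/2 := by
    rw [hnn]; push_cast; ring_nf
  have hmem : r ∈ closedBall (φ h r) (((rinv.nnnorm : ℝ)⁻¹ - (1/2 : ℝ≥0)) * δ) := by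
    rw [hrad, mem_closedBall, dist_comm]
    simp only [Good, Set.mem_setOf_eq] at hdR
    linarith
  obtain ⟨ρ, hρball, hρeq⟩ := hsurj hmem
  exact ⟨ρ, ha.2.2.1 hρball, hρeq, apriori hY hφ ha hhI hρball hρeq⟩

lemma Fb_spec {h : ℝ} {r : Fin n → ℝ} (hG : (h, r) ∈ Good O φ) :
    spec O φ h r (Fb O φ h r) := by
  have hE := spec_exists hY hφ hG
  rw [Fb, dif_pos hE]
  exact hE.choose_spec

lemma invert {h₁ : ℝ} {ρ₁ : Fin n → ℝ} (hh : 0 < h₁) (hρ : ρ₁ ∈ O)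
    (hD : ‖Dmap O φ (h₁, ρ₁) - ContinuousLinearMap.id ℝ (Fin n → ℝ)‖ ≤ 1/2) :
    ∃ inv : (ℝ × (Fin n → ℝ)) → (ℝ × (Fin n → ℝ)),
      ContDiffAt ℝ (⊤ : ℕ∞) inv (h₁, φ h₁ ρ₁) ∧ inv (h₁, φ h₁ ρ₁) = (h₁, ρ₁) ∧
      ∀ᶠ p in 𝓝 (h₁, φ h₁ ρ₁), (inv p).1 = p.1 ∧ φ (inv p).1 (inv p).2 = p.2 := by
  have hWn : (Set.Ici (0:ℝ)) ×ˢ O ∈ 𝓝 ((h₁, ρ₁) : ℝ × (Fin n → ℝ)) := by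
    refine Filter.mem_of_superset ((isOpen_Ioi.prod hY.isOpen).mem_nhds ⟨hh, hρ⟩) ?_
    exact Set.prod_mono Ioi_subset_Ici_self subset_rfl
  have hΦ : ContDiffAt ℝ (⊤ : ℕ∞) (Phi φ) (h₁, ρ₁) := hφ.smooth.contDiffAt hWn
  set DΦ := fderiv ℝ (Phi φ) (h₁, ρ₁) with hDΦ
  have hΦ' : HasFDerivAt (Phi φ) DΦ (h₁, ρ₁) :=
    (hΦ.differentiableAt (by simp)).hasFDerivAt
  have hDrel : Dmap O φ (h₁, ρ₁) = DΦ.comp (ContinuousLinearMap.inr ℝ ℝ (Fin n → ℝ)) := by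
    rw [Dmap, fderivWithin_of_mem_nhds hWn]
  have hA1 : ‖ContinuousLinearMap.id ℝ (Fin n → ℝ) - Dmap O φ (h₁, ρ₁)‖ < 1 := by
    rw [norm_sub_rev]; linarith
  have hA1' : ‖(1 : (Fin n → ℝ) →L[ℝ] (Fin n → ℝ)) - Dmap O φ (h₁, ρ₁)‖ < 1 := hA1
  set u : ((Fin n → ℝ) →L[ℝ] (Fin n → ℝ))ˣ :=
    Units.oneSub ((1 : (Fin n → ℝ) →L[ℝ] (Fin n → ℝ)) - Dmap O φ (h₁, ρ₁)) hA1' with hu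
  have huval : (u : (Fin n → ℝ) →L[ℝ] (Fin n → ℝ)) = Dmap O φ (h₁, ρ₁) := by
    show (1 : (Fin n → ℝ) →L[ℝ] (Fin n → ℝ)) - ((1 : (Fin n → ℝ) →L[ℝ] (Fin n → ℝ)) -
      Dmap O φ (h₁, ρ₁)) = Dmap O φ (h₁, ρ₁)
    exact sub_sub_cancel _ _
  set A : (Fin n → ℝ) ≃L[ℝ] (Fin n → ℝ) := ContinuousLinearEquiv.ofUnit u with hAdef
  have hAcoe : (A : (Fin n → ℝ) →L[ℝ] (Fin n → ℝ)) = Dmap O φ (h₁, ρ₁) := huval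
  set B : ℝ →L[ℝ] (Fin n → ℝ) := DΦ.comp (ContinuousLinearMap.inl ℝ ℝ (Fin n → ℝ)) with hB
  set f₁ : (ℝ × (Fin n → ℝ)) →L[ℝ] (ℝ × (Fin n → ℝ)) :=
    (ContinuousLinearMap.fst ℝ ℝ (Fin n → ℝ)).prod
      (B.comp (ContinuousLinearMap.fst ℝ ℝ (Fin n → ℝ)) +
        (A : (Fin n → ℝ) →L[ℝ] (Fin n → ℝ)).comp (ContinuousLinearMap.snd ℝ ℝ (Fin n → ℝ)))
    with hf₁
  set f₂ : (ℝ × (Fin n → ℝ)) →L[ℝ] (ℝ × (Fin n → ℝ)) :=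
    (ContinuousLinearMap.fst ℝ ℝ (Fin n → ℝ)).prod
      ((A.symm : (Fin n → ℝ) →L[ℝ] (Fin n → ℝ)).comp
        (ContinuousLinearMap.snd ℝ ℝ (Fin n → ℝ) -
          B.comp (ContinuousLinearMap.fst ℝ ℝ (Fin n → ℝ))))
    with hf₂
  have hleft : Function.LeftInverse f₂ f₁ := fun p => by
    simp [hf₁, hf₂, ContinuousLinearMap.prod_apply, add_sub_cancel_left]
  have hright : Function.RightInverse f₂ f₁ := fun p => by
    simp [hf₁, hf₂, ContinuousLinearMap.prod_apply, sub_add_cancel]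
  set T : (ℝ × (Fin n → ℝ)) ≃L[ℝ] (ℝ × (Fin n → ℝ)) :=
    ContinuousLinearEquiv.equivOfInverse f₁ f₂ hleft hright with hT
  set Ψ : ℝ × (Fin n → ℝ) → ℝ × (Fin n → ℝ) := fun p => (p.1, Phi φ p) with hΨdef
  have hΨ : ContDiffAt ℝ (⊤ : ℕ∞) Ψ (h₁, ρ₁) := contDiffAt_fst.prodMk hΦ
  have hTeq : ((ContinuousLinearMap.fst ℝ ℝ (Fin n → ℝ)).prod DΦ) =
      (T : (ℝ × (Fin n → ℝ)) →L[ℝ] (ℝ × (Fin n → ℝ))) := by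
    apply ContinuousLinearMap.ext
    intro q
    have hq : q = ((q.1, 0) : ℝ × (Fin n → ℝ)) + (0, q.2) := by simp
    have hTq : (T : (ℝ × (Fin n → ℝ)) →L[ℝ] (ℝ × (Fin n → ℝ))) q = f₁ q := by
      rw [hT]
      exact ContinuousLinearEquiv.equivOfInverse_apply f₁ f₂ hleft hright q
    rw [hTq]
    refine Prod.ext ?_ ?_
    · simp [hf₁, ContinuousLinearMap.prod_apply]
    · show DΦ q = _
      calc DΦ q = DΦ ((q.1, 0) + (0, q.2)) := by rw [← hq]
        _ = DΦ (q.1, 0) + DΦ (0, q.2) := map_add _ _ _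
        _ = B q.1 + (A : (Fin n → ℝ) →L[ℝ] (Fin n → ℝ)) q.2 := by
            rw [hAcoe, hDrel]
            simp [hB]
        _ = (f₁ q).2 := by
            simp [hf₁, ContinuousLinearMap.prod_apply]
  have hT' : HasFDerivAt Ψ (T : (ℝ × (Fin n → ℝ)) →L[ℝ] (ℝ × (Fin n → ℝ))) (h₁, ρ₁) := by
    rw [← hTeq]
    exact (hasFDerivAt_fst).prodMk hΦ'
  have hstrict := hΨ.hasStrictFDerivAt' hT' (by simp)
  set inv := hstrict.localInverse Ψ T (h₁, ρ₁) with hinv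
  have hΨpt : Ψ (h₁, ρ₁) = (h₁, φ h₁ ρ₁) := rfl
  refine ⟨inv, ?_, ?_, ?_⟩
  · have := hΨ.to_localInverse (f' := T) hT' (by simp)
    rw [hΨpt] at this
    exact this
  · have := hstrict.localInverse_apply_image
    rw [hΨpt] at this
    exact this
  · have hev := hstrict.eventually_right_inverse
    rw [hΨpt] at hev
    filter_upwards [hev] with p hp
    rw [Prod.ext_iff] at hp
    exact ⟨hp.1, hp.2⟩

lemma Fb_contDiffAt {h₁ : ℝ} {r₁ : Fin n → ℝ} (hG : (h₁, r₁) ∈ Good O φ) (h0 : 0 < h₁) :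
    ContDiffAt ℝ (⊤ : ℕ∞) (fun p : ℝ × (Fin n → ℝ) => Fb O φ p.1 p.2) (h₁, r₁) := by
  set ρ₁ := Fb O φ h₁ r₁ with hρ₁def
  have hs₁ : spec O φ h₁ r₁ ρ₁ := Fb_spec hY hφ hG
  obtain ⟨ha, hhI, hR2⟩ := good_delta hY hφ hG
  have hD : ‖Dmap O φ (h₁, ρ₁) - ContinuousLinearMap.id ℝ (Fin n → ℝ)‖ ≤ 1/2 :=
    ha.2.2.2 h₁ hhI ρ₁ (spec_mem_ball hY hφ hG hs₁)
  obtain ⟨inv, hinvA, hinvPt, hinvEv⟩ := invert hY hφ h0 hs₁.1 hD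
  rw [hs₁.2.1] at hinvA hinvPt hinvEv
  have hg : ContDiffAt ℝ (⊤ : ℕ∞) (fun p : ℝ × (Fin n → ℝ) => (inv p).2) (h₁, r₁) :=
    contDiff_snd.contDiffAt.comp _ hinvA
  refine hg.congr_of_eventuallyEq ?_
  obtain ⟨hr₁O, hh₁0, hhR₁, hdR₁⟩ := hG
  simp only at hr₁O hh₁0 hhR₁ hdR₁
  set d₁ := dist (φ h₁ r₁) r₁ with hd₁
  set R₁ := Rad O φ r₁ with hR₁
  set κ := min ((R₁ - h₁)/2) ((R₁ - 4*d₁)/5) with hκ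
  have hκpos : 0 < κ := by
    apply lt_min <;> simp only [hR₁, hd₁] <;> linarith
  have hWn : (Set.Ici (0:ℝ)) ×ˢ O ∈ 𝓝 ((h₁, r₁) : ℝ × (Fin n → ℝ)) :=
    Filter.mem_of_superset ((isOpen_Ioi.prod hY.isOpen).mem_nhds ⟨h0, hr₁O⟩)
      (Set.prod_mono Ioi_subset_Ici_self subset_rfl)
  have hΦc : ContinuousAt (Phi φ) (h₁, r₁) :=
    (hφ.smooth.continuousOn.continuousAt hWn)
  have E1 : ∀ᶠ p : ℝ × (Fin n → ℝ) in 𝓝 (h₁, r₁), p.2 ∈ O :=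
    continuousAt_snd.eventually_mem (hY.isOpen.mem_nhds hr₁O)
  have E2 : ∀ᶠ p : ℝ × (Fin n → ℝ) in 𝓝 (h₁, r₁), 0 < p.1 :=
    continuousAt_fst.eventually_mem (isOpen_Ioi.mem_nhds h0)
  have E3 : ∀ᶠ p : ℝ × (Fin n → ℝ) in 𝓝 (h₁, r₁), dist (Phi φ p) p.2 < d₁ + κ := by
    have ht : Tendsto (fun p : ℝ × (Fin n → ℝ) => dist (Phi φ p) p.2) (𝓝 (h₁, r₁))
        (𝓝 (dist (φ h₁ r₁) r₁)) := hΦc.dist continuousAt_snd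
    exact ht.eventually (gt_mem_nhds (by simp only [hd₁]; linarith))
  have E4 : ∀ᶠ p : ℝ × (Fin n → ℝ) in 𝓝 (h₁, r₁), p.2 ∈ ball r₁ κ :=
    continuousAt_snd.eventually_mem (Metric.ball_mem_nhds r₁ hκpos)
  have E5 : ∀ᶠ p : ℝ × (Fin n → ℝ) in 𝓝 (h₁, r₁), (inv p).2 ∈ ball ρ₁ κ := by
    have hc : ContinuousAt (fun p : ℝ × (Fin n → ℝ) => (inv p).2) (h₁, r₁) :=
      hg.continuousAt
    refine hc.eventually_mem ?_
    have : (inv (h₁, r₁)).2 = ρ₁ := by rw [hinvPt]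
    rw [this]
    exact Metric.ball_mem_nhds ρ₁ hκpos
  have E6 : ∀ᶠ p : ℝ × (Fin n → ℝ) in 𝓝 (h₁, r₁), (inv p).2 ∈ O := by
    have hc : ContinuousAt (fun p : ℝ × (Fin n → ℝ) => (inv p).2) (h₁, r₁) :=
      hg.continuousAt
    have hm : (inv (h₁, r₁)).2 ∈ O := by rw [hinvPt]; exact hs₁.1
    exact hc.eventually_mem (hY.isOpen.mem_nhds hm)
  have E7 : ∀ᶠ p : ℝ × (Fin n → ℝ) in 𝓝 (h₁, r₁), p.1 ∈ Iio (h₁ + κ) :=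
    continuousAt_fst.eventually_mem (isOpen_Iio.mem_nhds (show h₁ < h₁ + κ by linarith))
  filter_upwards [E1, E2, E3, E4, E5, E6, E7, hinvEv] with p hp1 hp2 hp3 hp4 hp5 hp6 hp7 hp8
  -- basic bounds
  have hRlow : R₁ - κ ≤ Rad O φ p.2 := by
    have h1 := Rad_lip hY hφ hr₁O hp1
    have h2 : dist r₁ p.2 < κ := by rw [dist_comm]; exact mem_ball.1 hp4
    simp only [hR₁] at *
    linarith
  have hκ1 : 2*κ ≤ R₁ - h₁ := by
    have := min_le_left ((R₁ - h₁)/2) ((R₁ - 4*d₁)/5); simp only [← hκ] at this; linarith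
  have hκ2 : 5*κ ≤ R₁ - 4*d₁ := by
    have := min_le_right ((R₁ - h₁)/2) ((R₁ - 4*d₁)/5); simp only [← hκ] at this; linarith
  have hd₁ρ : dist ρ₁ r₁ ≤ 2*d₁ := hs₁.2.2
  have hp7' : p.1 < h₁ + κ := mem_Iio.1 hp7
  have hGp : (p.1, p.2) ∈ Good O φ := by
    refine ⟨hp1, hp2.le, ?_, ?_⟩
    · simp only; linarith
    · simp only
      have : dist (φ p.1 p.2) p.2 < d₁ + κ := hp3
      linarith
  have hdistinv : dist ((inv p).2) p.2 ≤ Rad O φ p.2 / 2 := by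
    have h1 : dist ((inv p).2) p.2 ≤ dist ((inv p).2) ρ₁ + dist ρ₁ r₁ + dist r₁ p.2 := by
      calc dist ((inv p).2) p.2 ≤ dist ((inv p).2) ρ₁ + dist ρ₁ p.2 := dist_triangle _ _ _
        _ ≤ dist ((inv p).2) ρ₁ + (dist ρ₁ r₁ + dist r₁ p.2) := by
            linarith [dist_triangle ρ₁ r₁ p.2]
        _ = _ := by ring
    rw [dist_comm r₁ p.2] at h1
    have h2 : dist p.2 r₁ < κ := mem_ball.1 hp4
    have h3 : dist ((inv p).2) ρ₁ < κ := mem_ball.1 hp5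
    linarith
  obtain ⟨ha', hhI', hR2'⟩ := good_delta hY hφ hGp
  have hmem' : (inv p).2 ∈ closedBall p.2 (max p.1 (Rad O φ p.2 / 2)) :=
    mem_closedBall.2 (hdistinv.trans hR2')
  have hspec' : spec O φ p.1 p.2 ((inv p).2) := by
    refine ⟨hp6, ?_, ?_⟩
    · rw [← hp8.1]; exact hp8.2
    · exact apriori hY hφ ha' hhI' hmem' (by rw [← hp8.1]; exact hp8.2)
  have hGp' : (p.1, p.2) ∈ Good O φ := hGp
  exact spec_unique hY hφ hGp' (Fb_spec hY hφ hGp') hspec'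

lemma small_disp {r₁ : Fin n → ℝ} (hr : r₁ ∈ O) {c : ℝ} (hc : 0 < c) :
    ∃ ε > (0:ℝ), ∀ h (r : Fin n → ℝ), 0 ≤ h → h < ε → r ∈ O → dist r r₁ < ε →
      dist (φ h r) r < c := by
  have hcw : ContinuousWithinAt (Phi φ) ((Set.Ici (0:ℝ)) ×ˢ O) (0, r₁) :=
    hφ.smooth.continuousOn _ ⟨Set.self_mem_Ici, hr⟩
  rw [Metric.continuousWithinAt_iff] at hcw
  obtain ⟨δ, hδ, hball⟩ := hcw (c/2) (by linarith)
  refine ⟨min δ (c/2), by positivity, ?_⟩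
  intro h r hh0 hhε hrO hrd
  have h1 : dist ((h, r) : ℝ × (Fin n → ℝ)) (0, r₁) < δ := by
    rw [Prod.dist_eq]
    have h2 : dist h 0 < δ := by
      rw [Real.dist_eq, sub_zero, abs_of_nonneg hh0]
      exact lt_of_lt_of_le hhε (min_le_left _ _)
    have h3 : dist r r₁ < δ := lt_of_lt_of_le hrd (min_le_left _ _)
    exact max_lt h2 h3
  have hmemq : ((h, r) : ℝ × (Fin n → ℝ)) ∈ (Set.Ici (0:ℝ)) ×ˢ O := ⟨hh0, hrO⟩
  have h4 := hball hmemq h1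
  have h5 : Phi φ ((0:ℝ), r₁) = r₁ := phi_zero hY hφ hr
  rw [h5] at h4
  have h6 : dist r r₁ < c/2 := lt_of_lt_of_le hrd (min_le_right _ _)
  calc dist (φ h r) r ≤ dist (φ h r) r₁ + dist r₁ r := dist_triangle _ _ _
    _ < c/2 + c/2 := by rw [dist_comm r₁ r]; exact add_lt_add h4 h6
    _ = c := by ring

lemma boundary_contDiffAt {r₁ : Fin n → ℝ} (hr : r₁ ∈ O) :
    ContDiffAt ℝ (⊤ : ℕ∞) (fun p : ℝ × (Fin n → ℝ) =>
      if 0 ≤ p.1 then φ p.1 p.2 else Fb O φ (-p.1) p.2) (0, r₁) := by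
  set R₁ := Rad O φ r₁ with hR₁def
  have hR₁pos : 0 < R₁ := Rad_pos hY hφ hr
  obtain ⟨ε₀, hε₀, hdisp⟩ := small_disp hY hφ hr (show (0:ℝ) < R₁/32 by linarith)
  set a := (min ε₀ (R₁/8))/2 with hadef
  have ha0 : 0 < a := by positivity
  have haε : a < ε₀ := by
    have := min_le_left ε₀ (R₁/8); simp only [hadef]; linarith
  have haR : a < R₁/8 := by
    have := min_le_right ε₀ (R₁/8); simp only [hadef]; linarith
  have hGa : (a, r₁) ∈ Good O φ := by
    refine ⟨hr, ha0.le, by simp only; linarith, ?_⟩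
    have := hdisp a r₁ ha0.le haε hr (by simpa using hε₀)
    simp only
    linarith
  set ρs := Fb O φ a r₁ with hρsdef
  have hsa : spec O φ a r₁ ρs := Fb_spec hY hφ hGa
  obtain ⟨haadm, haI, haR2⟩ := good_delta hY hφ hGa
  have hD : ‖Dmap O φ (a, ρs) - ContinuousLinearMap.id ℝ (Fin n → ℝ)‖ ≤ 1/2 :=
    haadm.2.2.2 a haI ρs (spec_mem_ball hY hφ hGa hsa)
  obtain ⟨inv, hinvA, hinvPt, hinvEv⟩ := invert hY hφ ha0 hsa.1 hD
  rw [hsa.2.1] at hinvA hinvPt hinvEv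
  set σ := fun r : Fin n → ℝ => (inv (a, r)).2 with hσdef
  have hσ : ContDiffAt ℝ (⊤ : ℕ∞) σ r₁ := by
    have hi : ContDiffAt ℝ (⊤ : ℕ∞) (fun r : Fin n → ℝ => ((a, r) : ℝ × (Fin n → ℝ))) r₁ :=
      (contDiff_const.prodMk contDiff_id).contDiffAt
    exact contDiff_snd.contDiffAt.comp _ (hinvA.comp r₁ hi)
  have hσr₁ : σ r₁ = ρs := by
    show (inv (a, r₁)).2 = ρs
    rw [hinvPt]
  set g := fun p : ℝ × (Fin n → ℝ) => Phi φ (p.1 + a, σ p.2) with hgdef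
  have hWa : (Set.Ici (0:ℝ)) ×ˢ O ∈ 𝓝 ((a, ρs) : ℝ × (Fin n → ℝ)) :=
    Filter.mem_of_superset ((isOpen_Ioi.prod hY.isOpen).mem_nhds ⟨ha0, hsa.1⟩)
      (Set.prod_mono Ioi_subset_Ici_self subset_rfl)
  have hinner : ContDiffAt ℝ (⊤ : ℕ∞) (fun p : ℝ × (Fin n → ℝ) =>
      ((p.1 + a, σ p.2) : ℝ × (Fin n → ℝ))) (0, r₁) :=
    (contDiffAt_fst.add contDiffAt_const).prodMk (ContDiffAt.comp (g := σ) (f := Prod.snd) _ hσ contDiffAt_snd)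
  have houter : ContDiffAt ℝ (⊤ : ℕ∞) (Phi φ)
      ((fun p : ℝ × (Fin n → ℝ) => ((p.1 + a, σ p.2) : ℝ × (Fin n → ℝ))) (0, r₁)) := by
    show ContDiffAt ℝ (⊤ : ℕ∞) (Phi φ) (0 + a, σ r₁)
    rw [zero_add, hσr₁]
    exact hφ.smooth.contDiffAt hWa
  have hgA : ContDiffAt ℝ (⊤ : ℕ∞) g (0, r₁) :=
    ContDiffAt.comp (g := Phi φ)
      (f := fun p : ℝ × (Fin n → ℝ) => ((p.1 + a, σ p.2) : ℝ × (Fin n → ℝ)))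
      ((0:ℝ), r₁) houter hinner
  refine hgA.congr_of_eventuallyEq ?_
  have hg0 : g (0, r₁) = r₁ := by
    show Phi φ (0 + a, σ r₁) = r₁
    rw [zero_add, hσr₁]
    exact hsa.2.1
  have F1 : ∀ᶠ p : ℝ × (Fin n → ℝ) in 𝓝 (0, r₁), p.2 ∈ O :=
    continuousAt_snd.eventually_mem (hY.isOpen.mem_nhds hr)
  have F2 : ∀ᶠ p : ℝ × (Fin n → ℝ) in 𝓝 (0, r₁),
      (inv (a, p.2)).1 = a ∧ φ (inv (a, p.2)).1 (inv (a, p.2)).2 = p.2 := by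
    have htt : Tendsto (fun p : ℝ × (Fin n → ℝ) => ((a, p.2) : ℝ × (Fin n → ℝ)))
        (𝓝 (0, r₁)) (𝓝 (a, r₁)) := by
      have := ((continuous_const (y := a)).prodMk continuous_snd).tendsto
        ((0 : ℝ), r₁)
      exact this
    exact htt.eventually hinvEv
  have F3 : ∀ᶠ p : ℝ × (Fin n → ℝ) in 𝓝 (0, r₁), σ p.2 ∈ O := by
    have hc : ContinuousAt (fun p : ℝ × (Fin n → ℝ) => σ p.2) (0, r₁) :=
      ContinuousAt.comp (g := σ) (f := Prod.snd) (x := ((0:ℝ), r₁)) hσ.continuousAt continuousAt_snd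
    have hm : σ r₁ ∈ O := by rw [hσr₁]; exact hsa.1
    exact hc.eventually_mem (hY.isOpen.mem_nhds hm)
  have F4 : ∀ᶠ p : ℝ × (Fin n → ℝ) in 𝓝 (0, r₁), p.1 ∈ Ioo (-a) a :=
    continuousAt_fst.eventually_mem (isOpen_Ioo.mem_nhds (by constructor <;> simp <;> linarith))
  have F5 : ∀ᶠ p : ℝ × (Fin n → ℝ) in 𝓝 (0, r₁), p.2 ∈ ball r₁ (min ε₀ (R₁/16)) :=
    continuousAt_snd.eventually_mem (Metric.ball_mem_nhds r₁ (by positivity))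
  have F6 : ∀ᶠ p : ℝ × (Fin n → ℝ) in 𝓝 (0, r₁), g p ∈ ball r₁ (R₁/8) := by
    refine hgA.continuousAt.eventually_mem ?_
    rw [hg0]
    exact Metric.ball_mem_nhds r₁ (by linarith)
  filter_upwards [F1, F2, F3, F4, F5, F6] with p hp1 hp2 hp3 hp4 hp5 hp6
  have hp4' : -a < p.1 ∧ p.1 < a := mem_Ioo.1 hp4
  have hp5' : dist p.2 r₁ < min ε₀ (R₁/16) := mem_ball.1 hp5
  have hp5ε : dist p.2 r₁ < ε₀ := lt_of_lt_of_le hp5' (min_le_left _ _)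
  have hp5R : dist p.2 r₁ < R₁/16 := lt_of_lt_of_le hp5' (min_le_right _ _)
  have hp6' : dist (g p) r₁ < R₁/8 := mem_ball.1 hp6
  have hF2 : φ a (σ p.2) = p.2 := by
    have := hp2.2
    rw [hp2.1] at this
    exact this
  have hRlow : (15/16) * R₁ ≤ Rad O φ p.2 := by
    have h1 := Rad_lip hY hφ hr hp1
    have h2 : dist r₁ p.2 < R₁/16 := by rw [dist_comm]; exact hp5R
    simp only [hR₁def] at *
    linarith
  by_cases hp : 0 ≤ p.1
  · simp only [if_pos hp]
    show φ p.1 p.2 = Phi φ (p.1 + a, σ p.2)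
    show φ p.1 p.2 = φ (p.1 + a) (σ p.2)
    rw [← phi_add hY hφ hp ha0.le hp3, hF2]
  · simp only [if_neg hp]
    push_neg at hp
    have hh0 : (0:ℝ) ≤ -p.1 := by linarith
    have hha : -p.1 < a := by linarith [hp4'.1]
    have hGp : ((-p.1 : ℝ), p.2) ∈ Good O φ := by
      refine ⟨hp1, hh0, ?_, ?_⟩
      · simp only; linarith
      · simp only
        have := hdisp (-p.1) p.2 hh0 (by linarith) hp1 hp5ε
        linarith
    have hgO : g p ∈ O := hφ.mapsTo (p.1 + a) (by linarith [hp4'.1]) _ hp3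
    have hgφ : φ (-p.1) (g p) = p.2 := by
      show φ (-p.1) (φ (p.1 + a) (σ p.2)) = p.2
      rw [phi_add hY hφ hh0 (by linarith [hp4'.1]) hp3,
        show -p.1 + (p.1 + a) = a by ring, hF2]
    obtain ⟨ha', hhI', hR2'⟩ := good_delta hY hφ hGp
    have hmem' : g p ∈ closedBall p.2 (max (-p.1) (Rad O φ p.2 / 2)) := by
      rw [mem_closedBall]
      have h1 : dist (g p) p.2 ≤ dist (g p) r₁ + dist r₁ p.2 := dist_triangle _ _ _
      have h2 : dist r₁ p.2 < R₁/16 := by rw [dist_comm]; exact hp5R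
      have h3 : dist (g p) p.2 ≤ Rad O φ p.2 / 2 := by linarith
      exact h3.trans hR2'
    have hspec : spec O φ (-p.1) p.2 (g p) :=
      ⟨hgO, hgφ, apriori hY hφ ha' hhI' hmem' hgφ⟩
    exact spec_unique hY hφ hGp (Fb_spec hY hφ hGp) hspec

lemma box_exists {r₀ : Fin n → ℝ} (hr : r₀ ∈ O) :
    ∃ e s : ℝ, 0 < e ∧ 0 < s ∧ ball r₀ s ⊆ O ∧
      ∀ t (r : Fin n → ℝ), r ∈ ball r₀ s → -e < t → t < 0 → ((-t : ℝ), r) ∈ Good O φ := by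
  set R₀ := Rad O φ r₀ with hR₀def
  have hR₀pos : 0 < R₀ := Rad_pos hY hφ hr
  obtain ⟨ε₀, hε₀, hdisp⟩ := small_disp hY hφ hr (show (0:ℝ) < R₀/8 by linarith)
  obtain ⟨sO, hsO, hballO⟩ := Metric.isOpen_iff.1 hY.isOpen r₀ hr
  refine ⟨min ε₀ (R₀/4), min (min ε₀ (R₀/4)) sO, by positivity, by positivity, ?_, ?_⟩
  · exact (ball_subset_ball (min_le_right _ _)).trans hballO
  intro t r hrball hte ht0
  have hrO : r ∈ O := (ball_subset_ball (min_le_right _ _)).trans hballO hrball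
  have hrd : dist r r₀ < min ε₀ (R₀/4) := lt_of_lt_of_le (mem_ball.1 hrball) (min_le_left _ _)
  have hrdε : dist r r₀ < ε₀ := lt_of_lt_of_le hrd (min_le_left _ _)
  have hrdR : dist r r₀ < R₀/4 := lt_of_lt_of_le hrd (min_le_right _ _)
  have hh0 : (0:ℝ) ≤ -t := by linarith
  have hhε : -t < ε₀ := by
    have : -t < min ε₀ (R₀/4) := by linarith
    exact lt_of_lt_of_le this (min_le_left _ _)
  have hhR : -t < R₀/4 := by
    have : -t < min ε₀ (R₀/4) := by linarith
    exact lt_of_lt_of_le this (min_le_right _ _)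
  have hRlow : (3/4) * R₀ ≤ Rad O φ r := by
    have h1 := Rad_lip hY hφ hr hrO
    have h2 : dist r₀ r < R₀/4 := by rw [dist_comm]; exact hrdR
    simp only [hR₀def] at *
    linarith
  refine ⟨hrO, hh0, ?_, ?_⟩
  · simp only; linarith
  · simp only
    have := hdisp (-t) r hh0 hhε hrO hrdε
    linarith

end Basic

end SPFExt

/-- **Extension of the static price flow to negative times (Lemma 2.3).**
If an `n`-parameter yield curve model on an open set `O` satisfies SPA with static
price flow `φ`, then there are an open set `Oext ⊆ ℝ × O` containing `[0,∞) × O` and a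
smooth extension `φ̃ : Oext → O` of `φ` such that whenever `t, h ≥ 0`, `r ∈ O`,
`(-h, r) ∈ Oext` and `t - h ≥ 0`:
`Y_{t-h}(r) = Y_t(φ̃_{-h}(r))`, `L_{t-h}(r) = L_t(φ̃_{-h}(r)) - L_h(φ̃_{-h}(r))`, and
`P_{t-h}(r) = P_t(φ̃_{-h}(r)) / P_h(φ̃_{-h}(r))`. -/

theorem static_price_flow_extension {n : ℕ}
    (O : Set (Fin n → ℝ)) (Y : ℝ → (Fin n → ℝ) → ℝ)
    (hY : IsYCModel O Y)
    (φ : ℝ → (Fin n → ℝ) → (Fin n → ℝ)) (hφ : IsStaticPriceFlow O Y φ) :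
    ∃ (Oext : Set (ℝ × (Fin n → ℝ))) (φt : ℝ → (Fin n → ℝ) → (Fin n → ℝ)),
      IsOpen Oext ∧
      Set.Ici (0:ℝ) ×ˢ O ⊆ Oext ∧
      Oext ⊆ (Set.univ : Set ℝ) ×ˢ O ∧
      ContDiffOn ℝ (⊤ : ℕ∞) (fun p : ℝ × (Fin n → ℝ) => φt p.1 p.2) Oext ∧
      (∀ p ∈ Oext, φt p.1 p.2 ∈ O) ∧
      (∀ h, 0 ≤ h → ∀ r ∈ O, φt h r = φ h r) ∧
      (∀ t, 0 ≤ t → ∀ h, 0 ≤ h → ∀ r ∈ O, (-h, r) ∈ Oext → 0 ≤ t - h →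
        Y (t - h) r = Y t (φt (-h) r) ∧
        logPrice Y (t - h) r = logPrice Y t (φt (-h) r) - logPrice Y h (φt (-h) r) ∧
        price Y (t - h) r = price Y t (φt (-h) r) / price Y h (φt (-h) r)) := by
  classical
  have hboxes : ∀ r₀, r₀ ∈ O → ∃ e s : ℝ, 0 < e ∧ 0 < s ∧ Metric.ball r₀ s ⊆ O ∧
      ∀ t (r : Fin n → ℝ), r ∈ Metric.ball r₀ s → -e < t → t < 0 →
        ((-t : ℝ), r) ∈ SPFExt.Good O φ :=
    fun r₀ h => SPFExt.box_exists hY hφ h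
  choose e s he hs hsub hgood using hboxes
  set Oext : Set (ℝ × (Fin n → ℝ)) :=
    ⋃ (r₀ : Fin n → ℝ) (h : r₀ ∈ O),
      (Set.Ioi (-(e r₀ h))) ×ˢ Metric.ball r₀ (s r₀ h) with hOextdef
  set φt : ℝ → (Fin n → ℝ) → (Fin n → ℝ) :=
    fun t r => if 0 ≤ t then φ t r else SPFExt.Fb O φ (-t) r with hφtdef
  have hOopen : IsOpen Oext :=
    isOpen_iUnion fun r₀ => isOpen_iUnion fun h => isOpen_Ioi.prod Metric.isOpen_ball
  have hIci : Set.Ici (0:ℝ) ×ˢ O ⊆ Oext := by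
    rintro ⟨t, r⟩ ⟨ht, hr⟩
    refine Set.mem_iUnion.2 ⟨r, Set.mem_iUnion.2 ⟨hr, ?_⟩⟩
    exact ⟨lt_of_lt_of_le (neg_lt_zero.2 (he r hr)) ht, Metric.mem_ball_self (hs r hr)⟩
  have hsubuniv : Oext ⊆ (Set.univ : Set ℝ) ×ˢ O := by
    intro p hp
    simp only [hOextdef, Set.mem_iUnion] at hp
    obtain ⟨r₀, h₀, hpmem⟩ := hp
    exact ⟨trivial, hsub r₀ h₀ hpmem.2⟩
  have hmemGood : ∀ p : ℝ × (Fin n → ℝ), p ∈ Oext → p.1 < 0 →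
      ((-p.1 : ℝ), p.2) ∈ SPFExt.Good O φ := by
    intro p hp hneg
    simp only [hOextdef, Set.mem_iUnion] at hp
    obtain ⟨r₀, h₀, hpmem⟩ := hp
    exact hgood r₀ h₀ p.1 p.2 hpmem.2 hpmem.1 hneg
  refine ⟨Oext, φt, hOopen, hIci, hsubuniv, ?_, ?_, ?_, ?_⟩
  · -- smoothness
    intro p hp
    have hpO : p.2 ∈ O := (hsubuniv hp).2
    rcases lt_trichotomy p.1 0 with hneg | hzero | hpos
    · have hG := hmemGood p hp hneg
      have h1 : ContDiffAt ℝ (⊤ : ℕ∞) (fun q : ℝ × (Fin n → ℝ) => SPFExt.Fb O φ q.1 q.2)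
          ((-p.1, p.2) : ℝ × (Fin n → ℝ)) :=
        SPFExt.Fb_contDiffAt hY hφ hG (by linarith)
      have h2 : ContDiffAt ℝ (⊤ : ℕ∞) (fun q : ℝ × (Fin n → ℝ) => ((-q.1, q.2) : ℝ × (Fin n → ℝ))) p :=
        (contDiffAt_fst.neg).prodMk contDiffAt_snd
      have h3 : ContDiffAt ℝ (⊤ : ℕ∞) (fun q : ℝ × (Fin n → ℝ) => SPFExt.Fb O φ (-q.1) q.2) p :=
        ContDiffAt.comp (g := fun q : ℝ × (Fin n → ℝ) => SPFExt.Fb O φ q.1 q.2)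
          (f := fun q : ℝ × (Fin n → ℝ) => ((-q.1, q.2) : ℝ × (Fin n → ℝ))) p h1 h2
      refine (h3.congr_of_eventuallyEq ?_).contDiffWithinAt
      filter_upwards [continuousAt_fst.eventually_mem (isOpen_Iio.mem_nhds hneg)] with q hq
      simp only [hφtdef, if_neg (not_le.mpr (Set.mem_Iio.1 hq))]
    · have hb := SPFExt.boundary_contDiffAt hY hφ hpO
      have hpp : p = ((0:ℝ), p.2) := Prod.ext hzero rfl
      rw [hpp]
      exact hb.contDiffWithinAt
    · have h1 : ContDiffAt ℝ (⊤ : ℕ∞) (SPFExt.Phi φ) p := by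
        refine hφ.smooth.contDiffAt ?_
        refine Filter.mem_of_superset ((isOpen_Ioi.prod hY.isOpen).mem_nhds ?_)
          (Set.prod_mono Set.Ioi_subset_Ici_self subset_rfl)
        exact ⟨hpos, hpO⟩
      refine (h1.congr_of_eventuallyEq ?_).contDiffWithinAt
      filter_upwards [continuousAt_fst.eventually_mem (isOpen_Ioi.mem_nhds hpos)] with q hq
      simp only [hφtdef, if_pos (le_of_lt (Set.mem_Ioi.1 hq))]
      rfl
  · -- maps into O
    intro p hp
    by_cases h : 0 ≤ p.1
    · simp only [hφtdef, if_pos h]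
      exact hφ.mapsTo p.1 h p.2 (hsubuniv hp).2
    · push_neg at h
      simp only [hφtdef, if_neg (not_le.mpr h)]
      exact (SPFExt.Fb_spec hY hφ (hmemGood p hp h)).1
  · -- agrees with φ
    intro h hh r hr
    simp only [hφtdef, if_pos hh]
  · -- the identities
    intro t ht h hh r hr hmem hth
    have hkey : φt (-h) r ∈ O ∧ φ h (φt (-h) r) = r := by
      rcases eq_or_lt_of_le hh with heq | hlt
      · have h0 : φt (-h) r = r := by
          simp only [hφtdef, ← heq, neg_zero, if_pos le_rfl]
          exact SPFExt.phi_zero hY hφ hr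
        rw [h0, ← heq]
        exact ⟨hr, SPFExt.phi_zero hY hφ hr⟩
      · have hG := hmemGood ((-h, r) : ℝ × (Fin n → ℝ)) hmem (by simp only; linarith)
        rw [neg_neg] at hG
        have hspec := SPFExt.Fb_spec hY hφ hG
        have h0 : φt (-h) r = SPFExt.Fb O φ h r := by
          simp only [hφtdef, if_neg (not_le.mpr (by linarith : -h < (0:ℝ))), neg_neg]
        rw [h0]
        exact ⟨hspec.1, hspec.2.1⟩
    obtain ⟨hρO, hφρ⟩ := hkey
    set ρ := φt (-h) r with hρdef
    have Ya : ∀ u, 0 ≤ u → Y u r = Y (u + h) ρ := by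
      intro u hu
      rw [← hφρ]
      exact hφ.flow u hu h hh ρ hρO
    have hY1 : Y (t - h) r = Y t ρ := by
      rw [Ya (t - h) hth, sub_add_cancel]
    have hcont : ContinuousOn (fun u => Y u ρ) (Set.Ici (0:ℝ)) := by
      refine hY.smooth.continuousOn.comp
        ((continuous_id.prodMk continuous_const).continuousOn) ?_
      exact fun u hu => ⟨hu, hρO⟩
    have i1 : IntervalIntegrable (fun u => Y u ρ) MeasureTheory.volume 0 t := by
      refine (hcont.mono ?_).intervalIntegrable
      rw [Set.uIcc_of_le ht]
      exact fun x hx => hx.1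
    have i2 : IntervalIntegrable (fun u => Y u ρ) MeasureTheory.volume 0 h := by
      refine (hcont.mono ?_).intervalIntegrable
      rw [Set.uIcc_of_le hh]
      exact fun x hx => hx.1
    have L1 : logPrice Y (t - h) r = ∫ u in (0:ℝ)..(t - h), Y (u + h) ρ := by
      rw [logPrice]
      refine intervalIntegral.integral_congr ?_
      intro u hu
      rw [Set.uIcc_of_le hth] at hu
      exact Ya u hu.1
    have L2 : (∫ u in (0:ℝ)..(t - h), Y (u + h) ρ) = ∫ u in h..t, Y u ρ := by
      have := intervalIntegral.integral_comp_add_right (a := (0:ℝ)) (b := t - h)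
        (fun u => Y u ρ) h
      rw [this, zero_add, sub_add_cancel]
    have L3 : (∫ u in h..t, Y u ρ) = logPrice Y t ρ - logPrice Y h ρ :=
      (intervalIntegral.integral_interval_sub_left i1 i2).symm
    have hlog : logPrice Y (t - h) r = logPrice Y t ρ - logPrice Y h ρ :=
      L1.trans (L2.trans L3)
    refine ⟨hY1, hlog, ?_⟩
    rw [price, price, price, hlog, ← Real.exp_sub]
    congr 1
    ring
end

section
/- Let Y be an n-parameter yield curve model on an open set O ⊆ ℝ^n satisfying SPA, and let x be a bundle of futures that is self-financing at r ∈ O. Then: (i) x is a null investment at r if and only if Σ_t P_t(r')x_t = 0 for all r' in some neighborhood of r in O; (ii) x is a local arbitrage at r if and only if Σ_t P_t(r')x_t ≥ 0 for all r' in some neighborhood of r in O. -/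
open Real Set Topology

section AuxLemmas

variable {n : ℕ} {O : Set (Fin n → ℝ)} {Y : ℝ → (Fin n → ℝ) → ℝ}
  {φ : ℝ → (Fin n → ℝ) → (Fin n → ℝ)}

lemma phi_zero (hY : IsYCModel O Y) (hφ : IsStaticPriceFlow O Y φ) {ρ : Fin n → ℝ}
    (hρ : ρ ∈ O) : φ 0 ρ = ρ := by
  refine hY.inj _ (hφ.mapsTo 0 le_rfl ρ hρ) ρ hρ fun t ht => ?_
  rw [hφ.flow t ht 0 le_rfl ρ hρ, add_zero]

lemma Ycont (hY : IsYCModel O Y) {ρ : Fin n → ℝ} (hρ : ρ ∈ O) :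
    ContinuousOn (fun s : ℝ => Y s ρ) (Set.Ici 0) := by
  have h1 := hY.smooth.continuousOn
  exact h1.comp (Continuous.continuousOn (continuous_id.prodMk continuous_const))
    fun s hs => ⟨hs, hρ⟩

lemma Yint (hY : IsYCModel O Y) {ρ : Fin n → ℝ} (hρ : ρ ∈ O) {a b : ℝ}
    (ha : 0 ≤ a) (hb : 0 ≤ b) :
    IntervalIntegrable (fun s : ℝ => Y s ρ) MeasureTheory.volume a b :=
  ((Ycont hY hρ).mono (fun t ht => le_trans (le_min ha hb) ht.1)).intervalIntegrable

lemma price_shift (hY : IsYCModel O Y) (hφ : IsStaticPriceFlow O Y φ) {h t : ℝ}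
    (h0 : 0 ≤ h) (hht : h ≤ t) {ρ : Fin n → ℝ} (hρ : ρ ∈ O) :
    price Y (t - h) (φ h ρ) = Real.exp (logPrice Y h ρ) * price Y t ρ := by
  have ht0 : (0:ℝ) ≤ t := le_trans h0 hht
  have key : logPrice Y (t - h) (φ h ρ) = logPrice Y t ρ - logPrice Y h ρ := by
    have e1 : logPrice Y (t - h) (φ h ρ) = ∫ s in (0:ℝ)..(t - h), Y (s + h) ρ := by
      refine intervalIntegral.integral_congr fun s hs => ?_
      rw [Set.uIcc_of_le (by linarith)] at hs
      exact hφ.flow s hs.1 h h0 ρ hρ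
    have e2 : (∫ s in (0:ℝ)..(t - h), Y (s + h) ρ) = ∫ u in h..t, Y u ρ := by
      rw [intervalIntegral.integral_comp_add_right (fun u => Y u ρ) h, zero_add,
        sub_add_cancel]
    have e3 := intervalIntegral.integral_add_adjacent_intervals
      (Yint hY hρ le_rfl h0) (Yint hY hρ h0 ht0)
    rw [e1, e2]
    show _ = (∫ s in (0:ℝ)..t, Y s ρ) - ∫ s in (0:ℝ)..h, Y s ρ
    linarith [e3]
  rw [price, price, key, ← Real.exp_add]
  congr 1
  ring

lemma sum_shift (hY : IsYCModel O Y) (hφ : IsStaticPriceFlow O Y φ) {x : ℝ → ℝ}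
    (hfin : (Function.support x).Finite) {h : ℝ} (h0 : 0 ≤ h)
    (hsupp : ∀ t, x t ≠ 0 → h ≤ t) {ρ : Fin n → ℝ} (hρ : ρ ∈ O) :
    ∑ᶠ t, price Y (t - h) (φ h ρ) * x t
      = Real.exp (logPrice Y h ρ) * ∑ᶠ t, price Y t ρ * x t := by
  rw [mul_finsum _ _]
  refine finsum_congr fun t => ?_
  by_cases hxt : x t = 0
  · simp [hxt]
  · rw [price_shift hY hφ h0 (hsupp t hxt) hρ]; ring

/-- The identity as a nonlinear right inverse of the identity continuous linear map. -/
noncomputable def idNRI (n : ℕ) :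
    (ContinuousLinearMap.id ℝ (Fin n → ℝ)).NonlinearRightInverse where
  toFun := fun y => y
  nnnorm := 1
  bound' := fun y => by simp
  right_inv' := fun y => rfl

lemma exists_preimage (hY : IsYCModel O Y) (hφ : IsStaticPriceFlow O Y φ)
    {r : Fin n → ℝ} (hr : r ∈ O) {V : Set (Fin n → ℝ)} (hVo : IsOpen V) (hrV : r ∈ V)
    (hVO : V ⊆ O) :
    ∃ ε > (0:ℝ), ∃ U : Set (Fin n → ℝ), IsOpen U ∧ r ∈ U ∧ U ⊆ O ∧
      ∀ h ∈ Set.Ico (0:ℝ) ε, ∀ r' ∈ U, ∃ ρ ∈ V, φ h ρ = r' := by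
  classical
  set S : Set (ℝ × (Fin n → ℝ)) := Set.Ici (0:ℝ) ×ˢ O with hS
  set Φ : ℝ × (Fin n → ℝ) → (Fin n → ℝ) := fun q => φ q.1 q.2 with hΦ
  have hq0 : ((0:ℝ), r) ∈ S := Set.mk_mem_prod Set.self_mem_Ici hr
  have hSu : UniqueDiffOn ℝ S := (uniqueDiffOn_Ici 0).prod hY.isOpen.uniqueDiffOn
  have hΦ1 : ContDiffOn ℝ 1 Φ S := hφ.smooth.of_le (by simp)
  have hD : ContinuousOn (fderivWithin ℝ Φ S) S := hΦ1.continuousOn_fderivWithin hSu le_rfl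
  set inr := ContinuousLinearMap.inr ℝ ℝ (Fin n → ℝ) with hinr
  set A : ℝ × (Fin n → ℝ) → ((Fin n → ℝ) →L[ℝ] (Fin n → ℝ)) :=
    fun q => (fderivWithin ℝ Φ S q).comp inr with hA
  have hpart : ∀ h : ℝ, 0 ≤ h → ∀ p ∈ O,
      HasFDerivAt (fun p => φ h p) (A (h, p)) p := by
    intro h h0 p hp
    have hj : HasFDerivAt (fun p : Fin n → ℝ => ((h : ℝ), p)) inr p :=
      hasFDerivAt_prodMk_right h p
    have hΦd : HasFDerivWithinAt Φ (fderivWithin ℝ Φ S (h, p)) S (h, p) :=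
      (hΦ1.differentiableOn one_ne_zero (h, p) (Set.mk_mem_prod h0 hp)).hasFDerivWithinAt
    have hcomp := hΦd.comp p hj.hasFDerivWithinAt (fun q hq => Set.mk_mem_prod h0 hq)
    exact hcomp.hasFDerivAt (hY.isOpen.mem_nhds hp)
  have hAcont : ContinuousOn A S := by
    have hc : Continuous fun L : (ℝ × (Fin n → ℝ)) →L[ℝ] (Fin n → ℝ) => L.comp inr :=
      ((ContinuousLinearMap.compL ℝ (Fin n → ℝ) (ℝ × (Fin n → ℝ)) (Fin n → ℝ)).flip
        inr).continuous
    exact hc.comp_continuousOn hD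
  have hA0 : A (0, r) = ContinuousLinearMap.id ℝ (Fin n → ℝ) := by
    have h1 := hpart 0 le_rfl r hr
    have heq : (fun p => φ 0 p) =ᶠ[nhds r] (id : (Fin n → ℝ) → (Fin n → ℝ)) :=
      Filter.eventuallyEq_of_mem (hY.isOpen.mem_nhds hr) (fun p hp => phi_zero hY hφ hp)
    have h2 : HasFDerivAt (id : (Fin n → ℝ) → (Fin n → ℝ)) (A (0, r)) r :=
      heq.hasFDerivAt_iff.mp h1
    exact h2.unique (hasFDerivAt_id r)
  obtain ⟨ρ0, hρ0, hAb⟩ : ∃ ρ0 > (0:ℝ), ∀ q ∈ Metric.ball ((0:ℝ), r) ρ0 ∩ S,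
      ‖A q - ContinuousLinearMap.id ℝ (Fin n → ℝ)‖ < 1/2 := by
    have h1 : ContinuousWithinAt A S (0, r) := hAcont _ hq0
    have h2 : ∀ᶠ L in nhds (A (0, r)),
        ‖L - ContinuousLinearMap.id ℝ (Fin n → ℝ)‖ < 1/2 := by
      rw [hA0]
      have hb : Metric.ball (ContinuousLinearMap.id ℝ (Fin n → ℝ)) (1/2) ∈
          nhds (ContinuousLinearMap.id ℝ (Fin n → ℝ)) := Metric.ball_mem_nhds _ (by norm_num)
      filter_upwards [hb] with L hL
      rw [Metric.mem_ball, dist_eq_norm] at hL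
      exact hL
    have h3 := h1.eventually h2
    rcases Metric.mem_nhdsWithin_iff.1 (Filter.eventually_iff.mp h3) with ⟨ρ0, hρ0, hsub⟩
    exact ⟨ρ0, hρ0, fun q hq => hsub hq⟩
  obtain ⟨δ0, hδ0, hδ0V⟩ : ∃ δ0 > (0:ℝ), Metric.closedBall r δ0 ⊆ V := by
    rcases Metric.mem_nhds_iff.1 (hVo.mem_nhds hrV) with ⟨δ1, hδ1, hsub⟩
    exact ⟨δ1/2, by linarith, (Metric.closedBall_subset_ball (by linarith)).trans hsub⟩
  set δ := min δ0 (ρ0/2) with hδ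
  have hδpos : 0 < δ := lt_min hδ0 (by linarith)
  have hδV : Metric.closedBall r δ ⊆ V :=
    (Metric.closedBall_subset_closedBall (min_le_left _ _)).trans hδ0V
  have hδO : Metric.closedBall r δ ⊆ O := fun p hp => hVO (hδV hp)
  have hmem : ∀ h : ℝ, 0 ≤ h → h < ρ0/2 → ∀ p ∈ Metric.closedBall r δ,
      ((h, p) : ℝ × (Fin n → ℝ)) ∈ Metric.ball ((0:ℝ), r) ρ0 ∩ S := by
    intro h h0 hh p hp
    refine ⟨?_, Set.mk_mem_prod h0 (hδO hp)⟩
    rw [Metric.mem_ball, Prod.dist_eq]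
    refine max_lt ?_ ?_
    · rw [Real.dist_eq, sub_zero, abs_of_nonneg h0]; linarith
    · exact lt_of_le_of_lt (Metric.mem_closedBall.1 hp)
        (lt_of_le_of_lt (min_le_right _ _) (by linarith))
  have happrox : ∀ h : ℝ, 0 ≤ h → h < ρ0/2 →
      ApproximatesLinearOn (φ h) (ContinuousLinearMap.id ℝ (Fin n → ℝ))
        (Metric.closedBall r δ) (1/2 : NNReal) := by
    intro h h0 hh p hp p' hp'
    have hder : ∀ q ∈ Metric.closedBall r δ,
        HasFDerivWithinAt (fun p => φ h p - p)
          (A (h, q) - ContinuousLinearMap.id ℝ (Fin n → ℝ)) (Metric.closedBall r δ) q :=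
      fun q hq => ((hpart h h0 q (hδO hq)).sub (hasFDerivAt_id q)).hasFDerivWithinAt
    have hbound : ∀ q ∈ Metric.closedBall r δ,
        ‖A (h, q) - ContinuousLinearMap.id ℝ (Fin n → ℝ)‖ ≤ 1/2 :=
      fun q hq => (hAb _ (hmem h h0 hh q hq)).le
    have hmv := (convex_closedBall r δ).norm_image_sub_le_of_norm_hasFDerivWithin_le
      hder hbound hp' hp
    have e1 : ‖φ h p - φ h p' - ContinuousLinearMap.id ℝ (Fin n → ℝ) (p - p')‖
        = ‖(φ h p - p) - (φ h p' - p')‖ := by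
      rw [ContinuousLinearMap.id_apply]
      congr 1
      abel
    rw [e1]
    calc ‖(φ h p - p) - (φ h p' - p')‖ ≤ 1/2 * ‖p - p'‖ := hmv
      _ = ((1/2 : NNReal) : ℝ) * ‖p - p'‖ := by norm_num
  have hcw : ContinuousWithinAt (fun h : ℝ => φ h r) (Set.Ici 0) 0 := by
    have h1 : ContinuousWithinAt Φ S ((0:ℝ), r) := hφ.smooth.continuousOn _ hq0
    have h2 : ContinuousWithinAt (fun h : ℝ => ((h, r) : ℝ × (Fin n → ℝ))) (Set.Ici 0) 0 :=
      (continuous_id.prodMk continuous_const).continuousWithinAt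
    exact ContinuousWithinAt.comp (f := fun h : ℝ => ((h, r) : ℝ × (Fin n → ℝ)))
      (g := Φ) (x := (0:ℝ)) h1 h2 (fun h hh => Set.mk_mem_prod hh hr)
  obtain ⟨ε2, hε2, hsub2⟩ : ∃ ε2 > (0:ℝ), Metric.ball (0:ℝ) ε2 ∩ Set.Ici (0:ℝ) ⊆
      {h : ℝ | dist (φ h r) r < δ/4} := by
    have h2 : ∀ᶠ p in nhds ((fun h : ℝ => φ h r) 0), dist p r < δ/4 := by
      have : (fun h : ℝ => φ h r) 0 = r := phi_zero hY hφ hr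
      rw [this]
      filter_upwards [Metric.ball_mem_nhds r (by linarith : (0:ℝ) < δ/4)] with p hp
      exact Metric.mem_ball.1 hp
    exact Metric.mem_nhdsWithin_iff.1 (Filter.eventually_iff.mp (hcw.eventually h2))
  refine ⟨min (ρ0/2) ε2, lt_min (by linarith) hε2, Metric.ball r (δ/4), Metric.isOpen_ball,
    Metric.mem_ball_self (by linarith), ?_, ?_⟩
  · intro p hp
    exact hδO (Metric.mem_closedBall.2 (le_trans (Metric.mem_ball.1 hp).le (by linarith)))
  · intro h hh r' hr'
    have h0 := hh.1
    have hhρ : h < ρ0/2 := lt_of_lt_of_le hh.2 (min_le_left _ _)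
    have hhε2 : h < ε2 := lt_of_lt_of_le hh.2 (min_le_right _ _)
    have hdr : dist (φ h r) r < δ/4 := hsub2
      ⟨by rw [Metric.mem_ball, Real.dist_eq, sub_zero, abs_of_nonneg h0]; exact hhε2, h0⟩
    have hr'mem : r' ∈ Metric.closedBall (φ h r)
        ((((idNRI n).nnnorm : ℝ)⁻¹ - (1/2 : NNReal)) * δ) := by
      rw [Metric.mem_closedBall]
      have ht : dist r' (φ h r) ≤ dist r' r + dist r (φ h r) := dist_triangle _ _ _
      have h1 : dist r' r < δ/4 := Metric.mem_ball.1 hr'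
      have h2 : dist r (φ h r) < δ/4 := by rw [dist_comm]; exact hdr
      have h3 : (((idNRI n).nnnorm : ℝ)⁻¹ - ((1/2 : NNReal) : ℝ)) * δ = δ/2 := by
        norm_num [idNRI]
        ring
      rw [h3]
      linarith
    obtain ⟨ρ, hρmem, hρeq⟩ :=
      (happrox h h0 hhρ).surjOn_closedBall_of_nonlinearRightInverse (idNRI n) hδpos.le
        (Set.Subset.refl _) hr'mem
    exact ⟨ρ, hδV hρmem, hρeq⟩

end AuxLemmas

/-- **Proposition 2.5.** For a model satisfying SPA and a bundle `x` self-financing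
at `r ∈ O`: (i) `x` is a null investment at `r` iff `∑_t P_t(r') x_t = 0` for all `r'`
in some neighborhood of `r` in `O`; (ii) `x` is a local arbitrage at `r` iff
`∑_t P_t(r') x_t ≥ 0` for all `r'` in some neighborhood of `r` in `O`. -/
theorem null_and_arbitrage_neighborhood_characterization {n : ℕ}
    (O : Set (Fin n → ℝ)) (Y : ℝ → (Fin n → ℝ) → ℝ)
    (hY : IsYCModel O Y)
    (φ : ℝ → (Fin n → ℝ) → (Fin n → ℝ)) (hφ : IsStaticPriceFlow O Y φ)
    (x : ℝ → ℝ) (hx : IsBundle x)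
    (r : Fin n → ℝ) (hr : r ∈ O) (hself : SelfFinancing Y x r) :
    (NullInvestment O Y x r ↔
      ∃ U : Set (Fin n → ℝ), IsOpen U ∧ r ∈ U ∧ U ⊆ O ∧
        ∀ r' ∈ U, ∑ᶠ t, price Y t r' * x t = 0) ∧
    (LocalArbitrage O Y x r ↔
      ∃ U : Set (Fin n → ℝ), IsOpen U ∧ r ∈ U ∧ U ⊆ O ∧
        ∀ r' ∈ U, 0 ≤ ∑ᶠ t, price Y t r' * x t) := by
  obtain ⟨hxfin, hx0, hxneg⟩ := hx
  have hgap : ∃ m > (0:ℝ), ∀ t, x t ≠ 0 → m < t := by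
    have hfin : (Function.support x ∩ Set.Ioi 0).Finite := hxfin.inter_of_left _
    rcases Set.eq_empty_or_nonempty (Function.support x ∩ Set.Ioi 0) with he | hne
    · refine ⟨1, one_pos, fun t ht => ?_⟩
      exfalso
      rcases lt_trichotomy t 0 with h | h | h
      · exact ht (hxneg t h)
      · exact ht (h ▸ hx0)
      · have hmem : t ∈ Function.support x ∩ Set.Ioi 0 := ⟨ht, h⟩
        rw [he] at hmem
        exact hmem
    · obtain ⟨t0, ht0⟩ := hne
      have hne' : hfin.toFinset.Nonempty := ⟨t0, hfin.mem_toFinset.2 ht0⟩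
      set m' := hfin.toFinset.min' hne' with hm'
      have hm'mem : m' ∈ Function.support x ∩ Set.Ioi 0 :=
        hfin.mem_toFinset.1 (hfin.toFinset.min'_mem hne')
      have hm'pos : 0 < m' := hm'mem.2
      refine ⟨m'/2, by linarith, fun t ht => ?_⟩
      rcases lt_trichotomy t 0 with h | h | h
      · exact absurd (hxneg t h) ht
      · exact absurd (h ▸ hx0) ht
      · have : m' ≤ t := hfin.toFinset.min'_le t (hfin.mem_toFinset.2 ⟨ht, h⟩)
        linarith
  obtain ⟨m, hm, hmx⟩ := hgap
  constructor
  · constructor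
    · rintro ⟨ε, hε, hxz, U, hUo, hrU, hUO, hall⟩
      exact ⟨U, hUo, hrU, hUO, fun r' hr' => by simpa using hall 0 ⟨le_rfl, hε⟩ r' hr'⟩
    · rintro ⟨U₀, hU₀o, hrU₀, hU₀O, hval⟩
      obtain ⟨εf, hεf, U, hUo, hrU, hUO, hpre⟩ := exists_preimage hY hφ hr hU₀o hrU₀ hU₀O
      refine ⟨min m εf, lt_min hm hεf, ?_, U, hUo, hrU, hUO, ?_⟩
      · intro t ht
        by_contra hxt
        exact absurd (hmx t hxt) (not_lt.2 (le_trans ht.2 (min_le_left _ _)))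
      · intro h hh r' hr'
        obtain ⟨ρ, hρV, hρeq⟩ := hpre h ⟨hh.1, lt_of_lt_of_le hh.2 (min_le_right _ _)⟩ r' hr'
        have hht : ∀ t, x t ≠ 0 → h ≤ t := fun t ht =>
          (lt_trans (lt_of_lt_of_le hh.2 (min_le_left _ _)) (hmx t ht)).le
        rw [← hρeq, sum_shift hY hφ hxfin hh.1 hht (hU₀O hρV), hval ρ hρV, mul_zero]
  · constructor
    · rintro ⟨_, ε, hε, hxz, U, hUo, hrU, hUO, hall⟩
      exact ⟨U, hUo, hrU, hUO, fun r' hr' => by simpa using hall 0 ⟨le_rfl, hε⟩ r' hr'⟩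
    · rintro ⟨U₀, hU₀o, hrU₀, hU₀O, hval⟩
      obtain ⟨εf, hεf, U, hUo, hrU, hUO, hpre⟩ := exists_preimage hY hφ hr hU₀o hrU₀ hU₀O
      refine ⟨hself, min m εf, lt_min hm hεf, ?_, U, hUo, hrU, hUO, ?_⟩
      · intro t ht
        by_contra hxt
        exact absurd (hmx t hxt) (not_lt.2 (le_trans ht.2 (min_le_left _ _)))
      · intro h hh r' hr'
        obtain ⟨ρ, hρV, hρeq⟩ := hpre h ⟨hh.1, lt_of_lt_of_le hh.2 (min_le_right _ _)⟩ r' hr'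
        have hht : ∀ t, x t ≠ 0 → h ≤ t := fun t ht =>
          (lt_trans (lt_of_lt_of_le hh.2 (min_le_left _ _)) (hmx t ht)).le
        rw [← hρeq, sum_shift hY hφ hxfin hh.1 hht (hU₀O hρV)]
        exact mul_nonneg (Real.exp_nonneg _) (hval ρ hρV)
end

section
/- Let Y be a linear n-parameter yield curve model on a nonempty convex open set O ⊆ ℝ^n satisfying SPA with static price flow φ. Then for each h ≥ 0 the map φ_h : O → O is the restriction to O of a linear map of ℝ^n to itself; in fact there is an n×n real matrix A such that φ_h(r) = r·exp(hA) (row vector times matrix exponential) for all (h,r) ∈ [0,∞) × O. -/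
open Real Set Topology

open NormedSpace in
lemma matrix_exp_entry_hasDerivAt {n : ℕ} (A : Matrix (Fin n) (Fin n) ℝ) (t : ℝ) (i j : Fin n) :
    HasDerivAt (fun u : ℝ => NormedSpace.exp (u • A) i j) ((NormedSpace.exp (t • A) * A) i j) t := by
  letI : SeminormedRing (Matrix (Fin n) (Fin n) ℝ) := Matrix.linftyOpSemiNormedRing
  letI : NormedRing (Matrix (Fin n) (Fin n) ℝ) := Matrix.linftyOpNormedRing
  letI : NormedAlgebra ℝ (Matrix (Fin n) (Fin n) ℝ) := Matrix.linftyOpNormedAlgebra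
  have H := hasDerivAt_exp_smul_const (𝕂 := ℝ) A t
  rw [hasDerivAt_iff_tendsto_slope] at H ⊢
  have hc : Continuous (fun X : Matrix (Fin n) (Fin n) ℝ => X i j) :=
    continuous_id.matrix_elem i j
  refine ((hc.tendsto _).comp H).congr fun y => ?_
  simp [Function.comp, slope_def_module, Matrix.sub_apply, Matrix.smul_apply]
  exact Or.inl rfl

open NormedSpace in
lemma matrix_exp_neg_entry_hasDerivAt {n : ℕ} (A : Matrix (Fin n) (Fin n) ℝ) (t : ℝ) (i j : Fin n) :
    HasDerivAt (fun u : ℝ => NormedSpace.exp ((-u) • A) i j) (-((NormedSpace.exp ((-t) • A) * A) i j)) t := by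
  have := (matrix_exp_entry_hasDerivAt A (-t) i j).comp t (hasDerivAt_neg t)
  simpa [Function.comp_def, neg_smul, mul_comm] using this

open NormedSpace in
lemma matrix_exp_mul_exp_neg {n : ℕ} (h : ℝ) (A : Matrix (Fin n) (Fin n) ℝ) :
    NormedSpace.exp (h • A) * NormedSpace.exp ((-h) • A) = 1 := by
  have := Matrix.exp_add_of_commute (h • A) ((-h) • A)
    (((Commute.refl A).smul_left h).smul_right (-h))
  rw [← this, ← add_smul, add_neg_cancel, zero_smul, NormedSpace.exp_zero]

/-- **Proposition 2.10.** If a linear `n`-parameter yield curve model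
`Y_t(r) = ∑ᵢ rᵢ Yⁱ_t` on a nonempty convex open set `O` satisfies SPA with static
price flow `φ`, then each `φ_h` is the restriction to `O` of a linear map of `ℝⁿ`,
and in fact there is an `n × n` matrix `A` with `φ_h(r) = r · exp(h A)` for all
`h ≥ 0`, `r ∈ O`. -/
theorem static_price_flow_is_linear {n : ℕ}
    (O : Set (Fin n → ℝ)) (hconv : Convex ℝ O)
    (Yb : Fin n → ℝ → ℝ)
    (hYsmooth : ∀ i, ContDiffOn ℝ (⊤ : ℕ∞) (Yb i) (Set.Ici 0))
    (hindep : ∀ c : Fin n → ℝ, (∀ t, 0 ≤ t → ∑ i, c i * Yb i t = 0) → c = 0)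
    (Y : ℝ → (Fin n → ℝ) → ℝ) (hYdef : ∀ t r, Y t r = ∑ i, r i * Yb i t)
    (hY : IsYCModel O Y)
    (φ : ℝ → (Fin n → ℝ) → (Fin n → ℝ)) (hφ : IsStaticPriceFlow O Y φ) :
    (∀ h, 0 ≤ h → ∃ S : (Fin n → ℝ) →ₗ[ℝ] (Fin n → ℝ), ∀ r ∈ O, φ h r = S r) ∧
    (∃ A : Matrix (Fin n) (Fin n) ℝ, ∀ h, 0 ≤ h → ∀ r ∈ O,
      φ h r = Matrix.vecMul r (NormedSpace.exp (h • A))) := by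
  classical
  obtain ⟨r0, hr0⟩ := hY.nonempty
  obtain ⟨δ', hδ'pos, hball⟩ := Metric.isOpen_iff.mp hY.isOpen r0 hr0
  set δ := δ' / 2 with hδdef
  have hδpos : 0 < δ := by positivity
  set p : Fin n → (Fin n → ℝ) := fun i => r0 + δ • (Pi.single i 1 : Fin n → ℝ) with hp
  have hpO : ∀ i, p i ∈ O := by
    intro i
    apply hball
    have h1 : dist (p i) r0 = ‖δ • (Pi.single i 1 : Fin n → ℝ)‖ := by
      simp [p, dist_eq_norm]
    have h2 : ‖δ • (Pi.single i 1 : Fin n → ℝ)‖ ≤ δ := by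
      rw [norm_smul, Real.norm_of_nonneg hδpos.le]
      have : ‖(Pi.single i 1 : Fin n → ℝ)‖ ≤ 1 := by
        apply pi_norm_le_iff_of_nonneg zero_le_one |>.mpr
        intro j
        rcases eq_or_ne j i with rfl | hji
        · simp
        · simp [Pi.single_apply, hji]
      nlinarith
    rw [Metric.mem_ball, h1]
    calc ‖δ • (Pi.single i 1 : Fin n → ℝ)‖ ≤ δ := h2
      _ < δ' := by rw [hδdef]; linarith
  -- uniqueness of coefficients
  have uniq : ∀ c d : Fin n → ℝ, (∀ t, 0 ≤ t → ∑ i, c i * Yb i t = ∑ i, d i * Yb i t) → c = d := by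
    intro c d hcd
    have h0 := hindep (c - d) (by
      intro t ht
      have := hcd t ht
      simp only [Pi.sub_apply, sub_mul, Finset.sum_sub_distrib, this, sub_self])
    funext i
    have := congrFun h0 i
    simpa [sub_eq_zero] using this
  set M : ℝ → Matrix (Fin n) (Fin n) ℝ :=
    fun h => Matrix.of fun i j => (φ h (p i) j - φ h r0 j) / δ with hM
  have key : ∀ h, 0 ≤ h → ∀ i, ∀ t, 0 ≤ t → Yb i (t + h) = ∑ j, M h i j * Yb j t := by
    intro h hh i t ht
    have e1 := hφ.flow t ht h hh (p i) (hpO i)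
    have e2 := hφ.flow t ht h hh r0 hr0
    rw [hYdef, hYdef] at e1 e2
    have e3 : ∑ j, (φ h (p i) j - φ h r0 j) * Yb j t = δ * Yb i (t + h) := by
      calc ∑ j, (φ h (p i) j - φ h r0 j) * Yb j t
          = ∑ j, φ h (p i) j * Yb j t - ∑ j, φ h r0 j * Yb j t := by
            simp [sub_mul, Finset.sum_sub_distrib]
        _ = ∑ j, p i j * Yb j (t + h) - ∑ j, r0 j * Yb j (t + h) := by rw [e1, e2]
        _ = ∑ j, (p i j - r0 j) * Yb j (t + h) := by
            simp [sub_mul, Finset.sum_sub_distrib]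
        _ = δ * Yb i (t + h) := by
            simp [p, Pi.single_apply, ite_mul, Finset.sum_ite_eq']
    have : ∑ j, M h i j * Yb j t = (∑ j, (φ h (p i) j - φ h r0 j) * Yb j t) / δ := by
      rw [Finset.sum_div]
      refine Finset.sum_congr rfl fun j _ => ?_
      simp [M, div_mul_eq_mul_div]
    rw [this, e3, mul_div_cancel_left₀ _ hδpos.ne']
  have uniqM : ∀ C C' : Matrix (Fin n) (Fin n) ℝ,
      (∀ i, ∀ t, 0 ≤ t → ∑ j, C i j * Yb j t = ∑ j, C' i j * Yb j t) → C = C' := by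
    intro C C' hCC
    ext i j
    exact congrFun (uniq (fun j => C i j) (fun j => C' i j) (hCC i)) j
  have mainrel : ∀ h, 0 ≤ h → ∀ r, r ∈ O → φ h r = Matrix.vecMul r (M h) := by
    intro h hh r hr
    apply uniq
    intro t ht
    have e1 := hφ.flow t ht h hh r hr
    rw [hYdef, hYdef] at e1
    calc ∑ j, φ h r j * Yb j t = ∑ i, r i * Yb i (t + h) := e1
      _ = ∑ i, r i * ∑ j, M h i j * Yb j t :=
          Finset.sum_congr rfl fun i _ => by rw [key h hh i t ht]
      _ = ∑ i, ∑ j, r i * (M h i j * Yb j t) := by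
          simp [Finset.mul_sum]
      _ = ∑ j, ∑ i, r i * (M h i j * Yb j t) := Finset.sum_comm
      _ = ∑ j, Matrix.vecMul r (M h) j * Yb j t := by
          refine Finset.sum_congr rfl fun j _ => ?_
          simp [Matrix.vecMul, dotProduct, Finset.sum_mul, mul_assoc]
  have M0 : M 0 = 1 := by
    apply uniqM
    intro i t ht
    have h0 := key 0 le_rfl i t ht
    rw [add_zero] at h0
    rw [← h0]
    simp [Matrix.one_apply]
  have sg : ∀ h, 0 ≤ h → ∀ k, 0 ≤ k → M (h + k) = M h * M k := by
    intro h hh k hk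
    apply uniqM
    intro i t ht
    have e1 := key (h + k) (by linarith) i t ht
    rw [← e1, show t + (h + k) = t + k + h by ring, key h hh i (t + k) (by linarith)]
    calc ∑ j, M h i j * Yb j (t + k)
        = ∑ j, M h i j * ∑ l, M k j l * Yb l t :=
          Finset.sum_congr rfl fun j _ => by rw [key k hk j t ht]
      _ = ∑ j, ∑ l, M h i j * M k j l * Yb l t := by simp [Finset.mul_sum, mul_assoc]
      _ = ∑ l, ∑ j, M h i j * M k j l * Yb l t := Finset.sum_comm
      _ = ∑ l, (M h * M k) i l * Yb l t := by
          refine Finset.sum_congr rfl fun l _ => ?_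
          simp [Matrix.mul_apply, Finset.sum_mul]
  -- differentiability of M entries
  have hφdiff : ∀ r, r ∈ O → ∀ j, DifferentiableOn ℝ (fun h => φ h r j) (Ici 0) := by
    intro r hr j
    have h1 : ContDiffOn ℝ (⊤ : ℕ∞) (fun h : ℝ => φ h r) (Ici 0) :=
      hφ.smooth.comp ((contDiff_id.prodMk contDiff_const).contDiffOn) (fun h hh => ⟨hh, hr⟩)
    have h2 : DifferentiableOn ℝ (fun h : ℝ => φ h r) (Ici 0) := h1.differentiableOn (by simp)
    intro x hx
    exact differentiableWithinAt_pi.mp (h2 x hx) j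
  have hMdiff : ∀ i j, DifferentiableOn ℝ (fun h => M h i j) (Ici 0) := by
    intro i j x hx
    exact (((hφdiff (p i) (hpO i) j x hx).sub (hφdiff r0 hr0 j x hx)).div_const δ)
  set D : ℝ → Matrix (Fin n) (Fin n) ℝ :=
    fun h => Matrix.of fun i j => derivWithin (fun u => M u i j) (Ici 0) h with hD
  set A := D 0 with hA
  have hMd : ∀ h, 0 ≤ h → ∀ i j, HasDerivWithinAt (fun u => M u i j) (D h i j) (Ici 0) h :=
    fun h hh i j => (hMdiff i j h hh).hasDerivWithinAt
  have hDA : ∀ h, 0 ≤ h → ∀ i j, D h i j = (A * M h) i j := by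
    intro h hh i j
    have H1 : HasDerivWithinAt (fun k : ℝ => M (h + k) i j) (D h i j) (Ici 0) 0 := by
      have hg : HasDerivWithinAt (fun u => M u i j) (D h i j) (Ici 0) ((fun k : ℝ => h + k) 0) := by
        simpa using hMd h hh i j
      have hf : HasDerivWithinAt (fun k : ℝ => h + k) 1 (Ici 0) 0 :=
        ((hasDerivAt_id (0:ℝ)).const_add h).hasDerivWithinAt
      have := hg.comp (0:ℝ) hf (fun k hk => by
        simp only [mem_Ici] at hk ⊢; linarith)
      rw [mul_one] at this
      exact this
    have H2 : HasDerivWithinAt (fun k : ℝ => M (h + k) i j) ((A * M h) i j) (Ici 0) 0 := by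
      have base : ∀ l, HasDerivWithinAt (fun k => M k i l * M h l j) (A i l * M h l j) (Ici 0) 0 :=
        fun l => (hMd 0 le_rfl i l).mul_const _
      have Hs : HasDerivWithinAt (fun k => ∑ l, M k i l * M h l j)
          (∑ l, A i l * M h l j) (Ici 0) 0 := HasDerivWithinAt.fun_sum fun l _ => base l
      have Hc : HasDerivWithinAt (fun k : ℝ => M (h + k) i j)
          (∑ l, A i l * M h l j) (Ici 0) 0 := by
        refine Hs.congr (fun k hk => ?_) ?_
        · rw [show h + k = k + h by ring, sg k hk h hh, Matrix.mul_apply]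
        · rw [show h + (0:ℝ) = 0 + h by ring, sg 0 le_rfl h hh, Matrix.mul_apply]
      rw [Matrix.mul_apply]
      exact Hc
    have u1 := H1.derivWithin (uniqueDiffOn_Ici (0:ℝ) 0 Set.self_mem_Ici)
    have u2 := H2.derivWithin (uniqueDiffOn_Ici (0:ℝ) 0 Set.self_mem_Ici)
    rw [← u1, ← u2]
  have expcont : ∀ i l : Fin n, Continuous (fun k : ℝ => NormedSpace.exp ((-k) • A) i l) := by
    intro i l
    exact continuous_iff_continuousAt.mpr fun k =>
      (matrix_exp_neg_entry_hasDerivAt A k i l).continuousAt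
  have const : ∀ h, 0 ≤ h → ∀ i j,
      ∑ l, NormedSpace.exp ((-h) • A) i l * M h l j = (1 : Matrix (Fin n) (Fin n) ℝ) i j := by
    intro h hh i j
    set G : ℝ → ℝ := fun k => ∑ l, NormedSpace.exp ((-k) • A) i l * M k l j with hG
    have hcont : ContinuousOn G (Icc 0 h) := by
      apply continuousOn_finset_sum
      intro l _
      exact ((expcont i l).continuousOn).mul
        (((hMdiff l j).continuousOn).mono Icc_subset_Ici_self)
    have hderiv : ∀ x ∈ Ico 0 h, HasDerivWithinAt G 0 (Ici x) x := by
      intro x hx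
      have hx0 : 0 ≤ x := hx.1
      have terms : ∀ l, HasDerivWithinAt (fun k => NormedSpace.exp ((-k) • A) i l * M k l j)
          (-((NormedSpace.exp ((-x) • A) * A) i l) * M x l j
            + NormedSpace.exp ((-x) • A) i l * D x l j) (Ici 0) x :=
        fun l => ((matrix_exp_neg_entry_hasDerivAt A x i l).hasDerivWithinAt).mul (hMd x hx0 l j)
      have Hs := HasDerivWithinAt.fun_sum (u := Finset.univ) (fun l _ => terms l)
      have hzero : ∑ l, (-((NormedSpace.exp ((-x) • A) * A) i l) * M x l j
          + NormedSpace.exp ((-x) • A) i l * D x l j) = 0 := by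
        rw [Finset.sum_add_distrib]
        have e1 : ∑ l, -((NormedSpace.exp ((-x) • A) * A) i l) * M x l j
            = -((NormedSpace.exp ((-x) • A) * A * M x) i j) := by
          rw [Matrix.mul_apply (M := NormedSpace.exp ((-x) • A) * A) (N := M x)]
          simp [neg_mul]
        have e2 : ∑ l, NormedSpace.exp ((-x) • A) i l * D x l j
            = (NormedSpace.exp ((-x) • A) * A * M x) i j := by
          calc ∑ l, NormedSpace.exp ((-x) • A) i l * D x l j
              = ∑ l, NormedSpace.exp ((-x) • A) i l * (A * M x) l j :=
                Finset.sum_congr rfl fun l _ => by rw [hDA x hx0 l j]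
            _ = (NormedSpace.exp ((-x) • A) * (A * M x)) i j := (Matrix.mul_apply).symm
            _ = (NormedSpace.exp ((-x) • A) * A * M x) i j := by rw [Matrix.mul_assoc]
        rw [e1, e2, neg_add_cancel]
      rw [hzero] at Hs
      exact Hs.mono (Ici_subset_Ici.mpr hx0)
    have hGh := constant_of_has_deriv_right_zero hcont hderiv h (right_mem_Icc.mpr hh)
    have hG0 : G 0 = (1 : Matrix (Fin n) (Fin n) ℝ) i j := by
      simp only [hG, neg_zero, zero_smul, NormedSpace.exp_zero, M0]
      simp [Matrix.one_apply]
    exact hGh.trans hG0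
  have Mexp : ∀ h, 0 ≤ h → M h = NormedSpace.exp (h • A) := by
    intro h hh
    have h1 : NormedSpace.exp ((-h) • A) * M h = 1 := by
      ext i j
      rw [Matrix.mul_apply]
      exact const h hh i j
    calc M h = 1 * M h := (Matrix.one_mul _).symm
      _ = NormedSpace.exp (h • A) * NormedSpace.exp ((-h) • A) * M h := by
          rw [matrix_exp_mul_exp_neg]
      _ = NormedSpace.exp (h • A) * (NormedSpace.exp ((-h) • A) * M h) := by
          rw [Matrix.mul_assoc]
      _ = NormedSpace.exp (h • A) := by rw [h1, Matrix.mul_one]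
  refine ⟨fun h hh => ⟨(M h).vecMulLinear, fun r hr => ?_⟩, ⟨A, fun h hh r hr => ?_⟩⟩
  · rw [mainrel h hh r hr, Matrix.vecMulLinear_apply]
  · rw [mainrel h hh r hr, Mexp h hh]
end

section
/- Let Y_t(r) = Σ_{i=1}^n r_i Y^i_t be a linear n-parameter yield curve model on a nonempty convex open set O ⊆ ℝ^n satisfying SPA, and let A be an n×n real matrix such that the static price flow satisfies φ_h(r) = r·exp(hA) for all h ≥ 0 and r ∈ O. Then for all t ≥ 0 and i = 1,…,n: Y^i_t = Σ_{k=1}^n (exp(tA))_{ik} Y^k_0, and the basic curves satisfy the linear ODE dY^i_t/dt = Σ_{k=1}^n A_{ik} Y^k_t. -/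
open Real Set Topology

lemma exp_entry_hasDerivAt' {n : ℕ} (A : Matrix (Fin n) (Fin n) ℝ) (t : ℝ) (i k : Fin n) :
    HasDerivAt (fun u : ℝ => NormedSpace.exp (u • A) i k) ((A * NormedSpace.exp (t • A)) i k) t := by
  letI : NormedRing (Matrix (Fin n) (Fin n) ℝ) := Matrix.linftyOpNormedRing
  letI : NormedAlgebra ℝ (Matrix (Fin n) (Fin n) ℝ) := Matrix.linftyOpNormedAlgebra
  haveI : CompleteSpace (Matrix (Fin n) (Fin n) ℝ) := FiniteDimensional.complete ℝ _
  have h := hasDerivAt_exp_smul_const' (𝕂 := ℝ) A t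
  let L : Matrix (Fin n) (Fin n) ℝ →ₗ[ℝ] ℝ :=
    (LinearMap.proj (R := ℝ) (φ := fun _ : Fin n => ℝ) k).comp
      (LinearMap.proj (R := ℝ) (φ := fun _ : Fin n => (Fin n → ℝ)) i)
  exact (L.toContinuousLinearMap.hasFDerivAt).comp_hasDerivAt t h

lemma sum_eq_zero_on_open' {n : ℕ} {O : Set (Fin n → ℝ)} (hO : IsOpen O) (hne : O.Nonempty)
    (c : Fin n → ℝ) (h : ∀ r ∈ O, ∑ j, r j * c j = 0) : ∀ j, c j = 0 := by
  obtain ⟨r₀, hr₀⟩ := hne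
  obtain ⟨ε, hε, hball⟩ := Metric.isOpen_iff.mp hO r₀ hr₀
  intro j
  have h1 : r₀ + (ε/2) • (Pi.single j 1 : Fin n → ℝ) ∈ O := by
    apply hball
    rw [Metric.mem_ball, dist_eq_norm, add_sub_cancel_left, norm_smul, Pi.norm_single,
      norm_one, mul_one, Real.norm_eq_abs, abs_of_pos (by linarith)]
    linarith
  have h2 := h _ h1
  have h0 := h r₀ hr₀
  have hsingle : ∑ k, (Pi.single j 1 : Fin n → ℝ) k * c k = c j := by
    simp [Pi.single_apply, Finset.sum_ite_eq]
  have : ∑ k, (r₀ + (ε/2) • (Pi.single j 1 : Fin n → ℝ)) k * c k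
      = ∑ k, r₀ k * c k + (ε/2) * ∑ k, (Pi.single j 1 : Fin n → ℝ) k * c k := by
    rw [Finset.mul_sum, ← Finset.sum_add_distrib]
    refine Finset.sum_congr rfl fun k _ => ?_
    simp [Pi.add_apply, Pi.smul_apply, smul_eq_mul]; ring
  rw [this, h0, hsingle, zero_add] at h2
  have : c j = 0 := by
    have := mul_eq_zero.mp h2
    rcases this with h' | h'
    · linarith
    · exact h'
  exact this

/-- **Corollary 2.11.** Let `Y_t(r) = ∑ᵢ rᵢ Yⁱ_t` be a linear `n`-parameter yield
curve model on a nonempty convex open set `O` satisfying SPA, and let `A` be an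
`n × n` matrix with `φ_h(r) = r · exp(h A)` for `h ≥ 0`, `r ∈ O`.  Then for all
`t ≥ 0` and each `i`: `Yⁱ_t = ∑ₖ (exp(t A))_{ik} Yᵏ₀`, and the basic curves satisfy
the linear ODE `dYⁱ_t/dt = ∑ₖ A_{ik} Yᵏ_t` (one-sided at `t = 0`). -/

theorem basic_yield_curves_solve_linear_ode {n : ℕ}
    (O : Set (Fin n → ℝ)) (hconv : Convex ℝ O)
    (Yb : Fin n → ℝ → ℝ)
    (hYsmooth : ∀ i, ContDiffOn ℝ (⊤ : ℕ∞) (Yb i) (Set.Ici 0))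
    (hindep : ∀ c : Fin n → ℝ, (∀ t, 0 ≤ t → ∑ i, c i * Yb i t = 0) → c = 0)
    (Y : ℝ → (Fin n → ℝ) → ℝ) (hYdef : ∀ t r, Y t r = ∑ i, r i * Yb i t)
    (hY : IsYCModel O Y)
    (φ : ℝ → (Fin n → ℝ) → (Fin n → ℝ)) (hφ : IsStaticPriceFlow O Y φ)
    (A : Matrix (Fin n) (Fin n) ℝ)
    (hA : ∀ h, 0 ≤ h → ∀ r ∈ O, φ h r = Matrix.vecMul r (NormedSpace.exp (h • A))) :
    ∀ t, 0 ≤ t → ∀ i,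
      Yb i t = ∑ k, (NormedSpace.exp (t • A)) i k * Yb k 0 ∧
      HasDerivWithinAt (Yb i) (∑ k, A i k * Yb k t) (Set.Ici 0) t := by
  have key : ∀ t, 0 ≤ t → ∀ h, 0 ≤ h → ∀ j,
      Yb j (t + h) = ∑ i, (NormedSpace.exp (h • A)) j i * Yb i t := by
    intro t ht h hh
    have hz : ∀ r ∈ O, ∑ j, r j *
        ((∑ i, (NormedSpace.exp (h • A)) j i * Yb i t) - Yb j (t + h)) = 0 := by
      intro r hr
      have hf := hφ.flow t ht h hh r hr
      rw [hYdef, hYdef, hA h hh r hr] at hf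
      have expand : ∑ i, Matrix.vecMul r (NormedSpace.exp (h • A)) i * Yb i t
          = ∑ j, r j * ∑ i, (NormedSpace.exp (h • A)) j i * Yb i t := by
        simp only [Matrix.vecMul, dotProduct, Finset.sum_mul, Finset.mul_sum]
        rw [Finset.sum_comm]
        refine Finset.sum_congr rfl fun j _ => Finset.sum_congr rfl fun i _ => by ring
      rw [expand] at hf
      simp only [mul_sub, Finset.sum_sub_distrib, hf, sub_self]
    have hc := sum_eq_zero_on_open' hY.isOpen hY.nonempty _ hz
    intro j
    have := hc j
    have := sub_eq_zero.mp this
    linarith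
  have claim1 : ∀ t, 0 ≤ t → ∀ i, Yb i t = ∑ k, (NormedSpace.exp (t • A)) i k * Yb k 0 := by
    intro t ht i
    simpa using key 0 le_rfl t ht i
  intro t ht i
  refine ⟨claim1 t ht i, ?_⟩
  have hg : HasDerivAt (fun u => ∑ k, (NormedSpace.exp (u • A)) i k * Yb k 0)
      (∑ k, (A * NormedSpace.exp (t • A)) i k * Yb k 0) t := by
    apply HasDerivAt.fun_sum
    intro k _
    exact (exp_entry_hasDerivAt' A t i k).mul_const _
  have hval : ∑ k, (A * NormedSpace.exp (t • A)) i k * Yb k 0 = ∑ j, A i j * Yb j t := by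
    simp only [Matrix.mul_apply, Finset.sum_mul]
    rw [Finset.sum_comm]
    refine Finset.sum_congr rfl fun j _ => ?_
    rw [claim1 t ht j, Finset.mul_sum]
    exact Finset.sum_congr rfl fun k _ => by ring
  have hD := (hg.hasDerivWithinAt (s := Set.Ici 0)).congr
    (fun y hy => claim1 y hy i) (claim1 t ht i)
  rwa [hval] at hD
end

section
/- Let {Y^1,…,Y^n} and {Ỹ^1,…,Ỹ^m} be linearly independent lists of smooth functions [0,∞) → ℝ, and define Y(r) = Σ_{i=1}^n r_i Y^i for r ∈ ℝ^n and Ỹ(s) = Σ_{j=1}^m s_j Ỹ^j for s ∈ ℝ^m. Suppose there is a nonempty open set O₁ ⊆ ℝ^n such that for every r ∈ O₁ there exists s ∈ ℝ^m with Y_t(r) = Ỹ_t(s) for all t ≥ 0. Then there is an injective linear map S : ℝ^n → ℝ^m such that Y(r) = Ỹ(S(r)) for all r ∈ ℝ^n. Moreover S maps {r ∈ ℝ^n : Y_t(r) > 0 for all t ≥ 0} into {s ∈ ℝ^m : Ỹ_t(s) > 0 for all t ≥ 0}, and maps {r : inf_{t≥0} Y_t(r) > 0} into {s : inf_{t≥0}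 Ỹ_t(s) > 0}. -/
/-- **Definition 2.14 (inclusion of linear models), equivalence and mapping of
domains.**  Let `{Y¹,…,Yⁿ}` and `{Ỹ¹,…,Ỹᵐ}` be linearly independent lists of smooth
functions `[0,∞) → ℝ`.  If on some nonempty open `O₁ ⊆ ℝⁿ` every curve `Y(r)` equals
some curve `Ỹ(s)`, then there is an injective linear map `S : ℝⁿ → ℝᵐ` with
`Y(r) = Ỹ(S r)` for all `r`; moreover `S` maps the positive domain of `Y` into that
of `Ỹ`, and likewise for the strict positive domains. -/
theorem linear_model_inclusion {n m : ℕ}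
    (Y : Fin n → ℝ → ℝ) (Z : Fin m → ℝ → ℝ)
    (hYsmooth : ∀ i, ContDiffOn ℝ (⊤ : ℕ∞) (Y i) (Set.Ici 0))
    (hZsmooth : ∀ j, ContDiffOn ℝ (⊤ : ℕ∞) (Z j) (Set.Ici 0))
    (hYindep : ∀ c : Fin n → ℝ, (∀ t, 0 ≤ t → ∑ i, c i * Y i t = 0) → c = 0)
    (hZindep : ∀ c : Fin m → ℝ, (∀ t, 0 ≤ t → ∑ j, c j * Z j t = 0) → c = 0)
    (O₁ : Set (Fin n → ℝ)) (hO₁ : IsOpen O₁) (hO₁ne : O₁.Nonempty)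
    (hincl : ∀ r ∈ O₁, ∃ s : Fin m → ℝ, ∀ t, 0 ≤ t →
      ∑ i, r i * Y i t = ∑ j, s j * Z j t) :
    ∃ S : (Fin n → ℝ) →ₗ[ℝ] (Fin m → ℝ),
      Function.Injective S ∧
      (∀ r : Fin n → ℝ, ∀ t, 0 ≤ t → ∑ i, r i * Y i t = ∑ j, S r j * Z j t) ∧
      (∀ r : Fin n → ℝ, (∀ t, 0 ≤ t → 0 < ∑ i, r i * Y i t) →
        (∀ t, 0 ≤ t → 0 < ∑ j, S r j * Z j t)) ∧
      (∀ r : Fin n → ℝ, (∃ δ > (0:ℝ), ∀ t, 0 ≤ t → δ ≤ ∑ i, r i * Y i t) →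
        (∃ δ > (0:ℝ), ∀ t, 0 ≤ t → δ ≤ ∑ j, S r j * Z j t)) := by
  classical
  -- The set of r admitting a representation is a submodule containing O₁.
  let V : Submodule ℝ (Fin n → ℝ) :=
    { carrier := {r | ∃ s : Fin m → ℝ, ∀ t, 0 ≤ t →
        ∑ i, r i * Y i t = ∑ j, s j * Z j t}
      add_mem' := by
        rintro a b ⟨sa, hsa⟩ ⟨sb, hsb⟩
        refine ⟨sa + sb, fun t ht => ?_⟩
        simp only [Pi.add_apply, add_mul, Finset.sum_add_distrib, hsa t ht, hsb t ht]
      zero_mem' := ⟨0, fun t ht => by simp⟩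
      smul_mem' := by
        rintro c a ⟨sa, hsa⟩
        refine ⟨c • sa, fun t ht => ?_⟩
        simp only [Pi.smul_apply, smul_eq_mul, mul_assoc, ← Finset.mul_sum, hsa t ht] }
  have hVtop : V = ⊤ := by
    refine Submodule.eq_top_of_nonempty_interior' V ?_
    obtain ⟨r₀, hr₀⟩ := hO₁ne
    exact ⟨r₀, mem_interior.mpr ⟨O₁, fun r hr => hincl r hr, hO₁, hr₀⟩⟩
  have hV : ∀ r : Fin n → ℝ, ∃ s : Fin m → ℝ, ∀ t, 0 ≤ t →
      ∑ i, r i * Y i t = ∑ j, s j * Z j t := by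
    intro r
    have : r ∈ V := hVtop ▸ Submodule.mem_top
    exact this
  -- uniqueness of the representing s
  have uniq : ∀ (f : ℝ → ℝ) (s₁ s₂ : Fin m → ℝ),
      (∀ t, 0 ≤ t → f t = ∑ j, s₁ j * Z j t) →
      (∀ t, 0 ≤ t → f t = ∑ j, s₂ j * Z j t) → s₁ = s₂ := by
    intro f s₁ s₂ h1 h2
    have := hZindep (s₁ - s₂) (fun t ht => by
      simp only [Pi.sub_apply, sub_mul, Finset.sum_sub_distrib, ← h1 t ht, ← h2 t ht,
        sub_self])
    exact sub_eq_zero.mp this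
  set φ : (Fin n → ℝ) → (Fin m → ℝ) := fun r => (hV r).choose with hφ
  have hφspec : ∀ r : Fin n → ℝ, ∀ t, 0 ≤ t →
      ∑ i, r i * Y i t = ∑ j, φ r j * Z j t := fun r => (hV r).choose_spec
  have hadd : ∀ a b, φ (a + b) = φ a + φ b := by
    intro a b
    refine uniq (fun t => ∑ i, (a + b) i * Y i t) _ _ (hφspec (a + b)) ?_
    intro t ht
    simp only [Pi.add_apply, add_mul, Finset.sum_add_distrib, hφspec a t ht, hφspec b t ht]
  have hsmul : ∀ (c : ℝ) a, φ (c • a) = c • φ a := by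
    intro c a
    refine uniq (fun t => ∑ i, (c • a) i * Y i t) _ _ (hφspec (c • a)) ?_
    intro t ht
    simp only [Pi.smul_apply, smul_eq_mul, mul_assoc, ← Finset.mul_sum, hφspec a t ht]
  let S : (Fin n → ℝ) →ₗ[ℝ] (Fin m → ℝ) :=
    { toFun := φ, map_add' := hadd, map_smul' := hsmul }
  refine ⟨S, ?_, hφspec, ?_, ?_⟩
  · rw [injective_iff_map_eq_zero]
    intro r hr
    refine hYindep r (fun t ht => ?_)
    have : φ r = 0 := hr
    rw [hφspec r t ht, this]
    simp
  · intro r h t ht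
    rw [show ∑ j, S r j * Z j t = ∑ j, φ r j * Z j t from rfl,
      ← hφspec r t ht]
    exact h t ht
  · rintro r ⟨δ, hδ, h⟩
    refine ⟨δ, hδ, fun t ht => ?_⟩
    rw [show ∑ j, S r j * Z j t = ∑ j, φ r j * Z j t from rfl,
      ← hφspec r t ht]
    exact h t ht
end

section
/- Let V be a finite-dimensional real vector subspace of the space of functions [0,∞) → ℝ consisting of differentiable functions. (a) If V is spanned by {Re(f^q), Im(f^q) : q ∈ Q} (restricted to [0,∞)) for some closed set of exponents Q, then V is closed under differentiation, i.e. f ∈ V implies f' ∈ V. (b) Conversely, if V is closed under differentiation, then Q = {q ∈ ℕ × ℂ : both Re(f^q) and Im(f^q), restricted to [0,∞), lie in V} is a finite closed set of exponents and {Re(f^q), Im(f^q) : q ∈ Q} spans V. -/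
/-!
Since `(f^q)' = λ f^q + m f^{q'}`, the real and imaginary parts of the `f^q`, `q ∈ Q`, span a space
stable under differentiation when `Q` is closed.

Conversely, let `V` be stable. Its complexification `W = {h | Re h, Im h ∈ V}` is a
finite-dimensional complex space on which `D = d/dt` acts linearly, so `W` is the sum of the
generalized eigenspaces of `D`. If `(D - μ)^k w = 0`, then `w = e^{μt} p(t)` for a polynomial `p`:
by induction `(D - μ) w = e^{μt} P'(t)` for a polynomial `P`, and `w - e^{μt} P(t)` solves
`u' = μ u`. For such `w ∈ W`, `D - μ` differentiates `p`, so by induction on the degree every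
`t^m e^{μt}` with `m ≤ deg p` lies in `W`. Hence `W`, and with it `V`, is spanned by the `f^q` it
contains. Finally `f^{(m,μ)} ∈ W` is killed by `(D - μ)^{m+1}` but not by `(D - μ)^m`, so `μ` is
an eigenvalue of `D` and `m < dim W`: there are finitely many such exponents.
-/

open Set

/-- The function `f^q(t) = t^m e^{λt}` associated with the exponent `q = (m, λ)`. -/
noncomputable def fexp (q : ℕ × ℂ) (t : ℝ) : ℂ :=
  (t : ℂ) ^ q.1 * Complex.exp (q.2 * t)

/-- Restriction of a function on `ℝ` to `[0,∞)`. -/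
def rst (F : ℝ → ℝ) : ↥(Set.Ici (0:ℝ)) → ℝ := fun t => F t

/-- Extension of a function on `[0,∞)` to `ℝ` by `0`. -/
noncomputable def ext (f : ↥(Set.Ici (0:ℝ)) → ℝ) : ℝ → ℝ :=
  fun t => if h : t ∈ Set.Ici (0:ℝ) then f ⟨t, h⟩ else 0

/-- The derivative of a function on `[0,∞)` (one-sided at `0`). -/
noncomputable def derOn (f : ↥(Set.Ici (0:ℝ)) → ℝ) : ↥(Set.Ici (0:ℝ)) → ℝ :=
  fun t => derivWithin (ext f) (Set.Ici 0) (t : ℝ)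

/-- A set of exponents is closed if it is stable under conjugation
`(m,λ) ↦ (m, conj λ)` and under `(m,λ) ↦ (max(0,m−1), λ)`. -/
def ExpClosed (Q : Set (ℕ × ℂ)) : Prop :=
  ∀ q ∈ Q, ((q.1, (starRingEnd ℂ) q.2) ∈ Q ∧ (q.1 - 1, q.2) ∈ Q)

/-- The real and imaginary parts of the `f^q`, `q ∈ Q`, restricted to `[0,∞)`. -/
noncomputable def reimSet (Q : Set (ℕ × ℂ)) : Set (↥(Set.Ici (0:ℝ)) → ℝ) :=
  {g | ∃ q ∈ Q, g = rst (fun t => (fexp q t).re) ∨ g = rst (fun t => (fexp q t).im)}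

/-- The set of exponents `q` such that both `Re f^q` and `Im f^q`, restricted
to `[0,∞)`, lie in `V`. -/
noncomputable def expSet (V : Submodule ℝ (↥(Set.Ici (0:ℝ)) → ℝ)) : Set (ℕ × ℂ) :=
  {q | rst (fun t => (fexp q t).re) ∈ V ∧ rst (fun t => (fexp q t).im) ∈ V}


open Polynomial

local notation "I₀" => Set.Elem (Set.Ici (0:ℝ))

lemma Polynomial.exists_derivative_eq {K : Type*} [Field K] [CharZero K] (p : K[X]) :
    ∃ P, derivative P = p := by
  induction p using Polynomial.induction_on' with
  | add p q hp hq =>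
    obtain ⟨P, rfl⟩ := hp
    obtain ⟨Q, rfl⟩ := hq
    exact ⟨P + Q, derivative_add⟩
  | monomial n a =>
    refine ⟨monomial (n + 1) (a / (n + 1)), ?_⟩
    rw [derivative_monomial]
    simp only [add_tsub_cancel_right, Nat.cast_add, Nat.cast_one]
    field_simp

namespace Module.End

variable {K M : Type*} [Field K] [AddCommGroup M] [Module K M] {f : End K M} {μ : K} {w : M}
  {k : ℕ}

lemma lt_finrank_of_pow_apply_eq_zero [FiniteDimensional K M]
    (h : ((f - μ • 1) ^ (k + 1)) w = 0) (hk : ((f - μ • 1) ^ k) w ≠ 0) : k < finrank K M := by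
  by_contra! hle
  have hmono : f.genEigenspace μ (k + 1 : ℕ) ≤ f.genEigenspace μ k := calc
    _ ≤ f.maxGenEigenspace μ := (f.genEigenspace μ).monotone le_top
    _ = f.genEigenspace μ (finrank K M) := f.maxGenEigenspace_eq_genEigenspace_finrank μ
    _ ≤ f.genEigenspace μ k := (f.genEigenspace μ).monotone (by exact_mod_cast hle)
  exact hk (mem_genEigenspace_nat.1 (hmono (mem_genEigenspace_nat.2 h)))

lemma hasEigenvalue_of_pow_apply_eq_zero (h : ((f - μ • 1) ^ k) w = 0) (hw : w ≠ 0) :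
    f.HasEigenvalue μ :=
  hasEigenvalue_of_hasGenEigenvalue (k := k)
    ((Submodule.ne_bot_iff _).2 ⟨w, mem_genEigenspace_nat.2 h, hw⟩)

end Module.End

lemma ExpClosed.mem_of_le {Q : Set (ℕ × ℂ)} (hQ : ExpClosed Q) {n : ℕ} {μ : ℂ} (hn : (n, μ) ∈ Q)
    {m : ℕ} (hm : m ≤ n) : (m, μ) ∈ Q := by
  induction n with
  | zero => rwa [Nat.le_zero.1 hm]
  | succ n ih =>
    rcases hm.lt_or_eq with hm | rfl
    · exact ih (by simpa using (hQ _ hn).2) (Nat.lt_succ_iff.1 hm)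
    · exact hn

section Extension

variable {E F : Type*} [NormedAddCommGroup E] [NormedAddCommGroup F]

noncomputable def extend0 (h : I₀ → E) : ℝ → E :=
  fun t => if ht : t ∈ Set.Ici (0:ℝ) then h ⟨t, ht⟩ else 0

lemma extend0_coe (h : I₀ → E) (t : I₀) : extend0 h t = h t := dif_pos t.2

lemma eqOn_extend0_domRestrict (F : ℝ → E) : EqOn (extend0 ((Ici 0).domRestrict F)) F (Ici 0) :=
  fun _ ht => dif_pos ht

lemma extend0_zero : extend0 (0 : I₀ → E) = 0 := by
  funext t; simp [extend0]

lemma extend0_add (h g : I₀ → E) : extend0 (h + g) = extend0 h + extend0 g := by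
  funext t; by_cases ht : t ∈ Ici (0:ℝ) <;> simp [extend0, ht]

lemma extend0_smul {R : Type*} [SMulZeroClass R E] (c : R) (h : I₀ → E) :
    extend0 (c • h) = c • extend0 h := by
  funext t; by_cases ht : t ∈ Ici (0:ℝ) <;> simp [extend0, ht]

variable [NormedSpace ℝ E] [NormedSpace ℝ F]

lemma extend0_comp (L : E →L[ℝ] F) (h : I₀ → E) : extend0 (L ∘ h) = L ∘ extend0 h := by
  funext t; by_cases ht : t ∈ Ici (0:ℝ) <;> simp [extend0, ht]

noncomputable def derivOn (h : I₀ → E) : I₀ → E :=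
  fun t => derivWithin (extend0 h) (Set.Ici 0) (t : ℝ)

lemma derOn_eq_derivOn (f : I₀ → ℝ) : derOn f = derivOn f := rfl

lemma derivOn_eq_of_hasDerivWithinAt {h h' : I₀ → E}
    (hd : ∀ t : I₀, HasDerivWithinAt (extend0 h) (h' t) (Ici 0) t) : derivOn h = h' :=
  funext fun t => (hd t).derivWithin (uniqueDiffOn_Ici 0 _ t.2)

lemma hasDerivWithinAt_derivOn {h : I₀ → E} (hd : DifferentiableOn ℝ (extend0 h) (Ici 0))
    (t : I₀) : HasDerivWithinAt (extend0 h) (derivOn h t) (Ici 0) t :=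
  (hd t t.2).hasDerivWithinAt

lemma differentiableOn_extend0_domRestrict {F : ℝ → E} (hF : Differentiable ℝ F) :
    DifferentiableOn ℝ (extend0 ((Ici 0).domRestrict F)) (Ici 0) :=
  hF.differentiableOn.congr (eqOn_extend0_domRestrict F)

lemma derivOn_domRestrict {F : ℝ → E} (hF : Differentiable ℝ F) :
    derivOn ((Ici 0).domRestrict F) = (Ici 0).domRestrict (deriv F) :=
  derivOn_eq_of_hasDerivWithinAt fun t => (hF t).hasDerivAt.hasDerivWithinAt.congr
    (eqOn_extend0_domRestrict F) (eqOn_extend0_domRestrict F t.2)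

lemma derivOn_zero : derivOn (0 : I₀ → E) = 0 :=
  derivOn_eq_of_hasDerivWithinAt fun t => by
    rw [extend0_zero]
    exact hasDerivWithinAt_const (t : ℝ) (Ici 0) (0 : E)

lemma derivOn_add {h g : I₀ → E} (hh : DifferentiableOn ℝ (extend0 h) (Ici 0))
    (hg : DifferentiableOn ℝ (extend0 g) (Ici 0)) : derivOn (h + g) = derivOn h + derivOn g :=
  derivOn_eq_of_hasDerivWithinAt fun t => by
    rw [extend0_add]
    exact (hasDerivWithinAt_derivOn hh t).add (hasDerivWithinAt_derivOn hg t)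

lemma derivOn_smul {R : Type*} [Monoid R] [DistribMulAction R E] [SMulCommClass ℝ R E]
    [ContinuousConstSMul R E] (c : R) {h : I₀ → E} (hh : DifferentiableOn ℝ (extend0 h) (Ici 0)) :
    derivOn (c • h) = c • derivOn h :=
  derivOn_eq_of_hasDerivWithinAt fun t => by
    rw [extend0_smul]
    exact (hasDerivWithinAt_derivOn hh t).const_smul c

lemma derivOn_comp (L : E →L[ℝ] F) {h : I₀ → E} (hh : DifferentiableOn ℝ (extend0 h) (Ici 0)) :
    derivOn (L ∘ h) = L ∘ derivOn h :=
  derivOn_eq_of_hasDerivWithinAt fun t => by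
    rw [extend0_comp]
    exact L.hasFDerivAt.comp_hasDerivWithinAt _ (hasDerivWithinAt_derivOn hh t)

end Extension

lemma derOn_re {h : I₀ → ℂ} (hh : DifferentiableOn ℝ (extend0 h) (Ici 0)) :
    derOn (fun t => (h t).re) = fun t => (derivOn h t).re :=
  derivOn_comp Complex.reCLM hh

lemma derOn_im {h : I₀ → ℂ} (hh : DifferentiableOn ℝ (extend0 h) (Ici 0)) :
    derOn (fun t => (h t).im) = fun t => (derivOn h t).im :=
  derivOn_comp Complex.imCLM hh

lemma hasDerivAt_cexp_mul (μ : ℂ) (t : ℝ) :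
    HasDerivAt (fun s : ℝ => Complex.exp (μ * s)) (μ * Complex.exp (μ * t)) t := by
  simpa [mul_comm] using ((hasDerivAt_id (t : ℂ)).const_mul μ).cexp.comp_ofReal

lemma eq_mul_cexp_of_hasDerivWithinAt {F : ℝ → ℂ} {μ : ℂ}
    (hF : ∀ t ∈ Ici (0:ℝ), HasDerivWithinAt F (μ * F t) (Ici 0) t) {t : ℝ} (ht : 0 ≤ t) :
    F t = F 0 * Complex.exp (μ * t) := by
  set G : ℝ → ℂ := fun s => F s * Complex.exp (-μ * s)
  have hG : ∀ s ∈ Ici (0:ℝ), HasDerivWithinAt G 0 (Ici 0) s := fun s hs =>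
    ((hF s hs).fun_mul (hasDerivAt_cexp_mul (-μ) s).hasDerivWithinAt).congr_deriv (by ring)
  have hGt : G t = G 0 := by
    simpa [sub_eq_zero] using Convex.norm_image_sub_le_of_norm_hasDerivWithin_le hG
      (fun _ _ => norm_zero.le) (convex_Ici 0) self_mem_Ici ht
  calc F t = G t * Complex.exp (μ * t) := by simp [G, mul_assoc, ← Complex.exp_add]
    _ = F 0 * Complex.exp (μ * t) := by rw [hGt]; simp [G]

section Complexify

variable {X : Type*} (V : Submodule ℝ (X → ℝ))

def complexify : Submodule ℂ (X → ℂ) where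
  carrier := {h | (fun x => (h x).re) ∈ V ∧ (fun x => (h x).im) ∈ V}
  add_mem' hh hg := ⟨V.add_mem hh.1 hg.1, V.add_mem hh.2 hg.2⟩
  zero_mem' := ⟨V.zero_mem, V.zero_mem⟩
  smul_mem' c h hh := by
    constructor
    · convert V.sub_mem (V.smul_mem c.re hh.1) (V.smul_mem c.im hh.2) using 1
      funext x; simp
    · convert V.add_mem (V.smul_mem c.re hh.2) (V.smul_mem c.im hh.1) using 1
      funext x; simp

variable {V}

lemma ofReal_comp_mem_complexify {f : X → ℝ} (hf : f ∈ V) :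
    (fun x => (f x : ℂ)) ∈ complexify V :=
  ⟨hf, V.zero_mem⟩

lemma finiteDimensional_complexify [FiniteDimensional ℝ V] :
    FiniteDimensional ℂ (complexify V) := by
  let L : complexify V →ₗ[ℝ] V × V :=
    { toFun h := (⟨_, h.2.1⟩, ⟨_, h.2.2⟩)
      map_add' _ _ := rfl
      map_smul' _ _ := by ext <;> simp }
  have hL : Function.Injective L := fun h g hhg => Subtype.ext <| funext fun x =>
    Complex.ext (congrFun (congrArg (Subtype.val ∘ Prod.fst) hhg) x)
      (congrFun (congrArg (Subtype.val ∘ Prod.snd) hhg) x)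
  have : Module.Finite ℝ (complexify V) := Module.Finite.of_injective L hL
  exact Module.Finite.of_restrictScalars_finite ℝ ℂ _

end Complexify

noncomputable def expPoly (μ : ℂ) (p : ℂ[X]) (t : ℝ) : ℂ :=
  p.eval (t : ℂ) * Complex.exp (μ * t)

lemma fexp_eq_expPoly (m : ℕ) (μ : ℂ) : fexp (m, μ) = expPoly μ (X ^ m) := by
  funext t; simp [fexp, expPoly]

lemma hasDerivAt_expPoly (μ : ℂ) (p : ℂ[X]) (t : ℝ) :
    HasDerivAt (expPoly μ p) (expPoly μ (derivative p) t + μ * expPoly μ p t) t :=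
  ((p.hasDerivAt (t : ℂ)).comp_ofReal.fun_mul (hasDerivAt_cexp_mul μ t)).congr_deriv
    (by simp only [expPoly]; ring)

lemma differentiable_expPoly (μ : ℂ) (p : ℂ[X]) : Differentiable ℝ (expPoly μ p) :=
  fun t => (hasDerivAt_expPoly μ p t).differentiableAt

lemma hasDerivAt_fexp (q : ℕ × ℂ) (t : ℝ) :
    HasDerivAt (fexp q) (q.2 * fexp q t + q.1 * fexp (q.1 - 1, q.2) t) t := by
  obtain ⟨m, μ⟩ := q
  simp only [fexp_eq_expPoly]
  convert hasDerivAt_expPoly μ (X ^ m) t using 1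
  simp [expPoly, derivative_X_pow]
  ring

lemma differentiable_fexp (q : ℕ × ℂ) : Differentiable ℝ (fexp q) :=
  fun t => (hasDerivAt_fexp q t).differentiableAt

lemma derivOn_domRestrict_expPoly (μ : ℂ) (p : ℂ[X]) :
    derivOn ((Ici 0).domRestrict (expPoly μ p)) =
      (Ici 0).domRestrict (expPoly μ (derivative p)) + μ • (Ici 0).domRestrict (expPoly μ p) := by
  rw [derivOn_domRestrict (differentiable_expPoly μ p)]
  funext t
  exact (hasDerivAt_expPoly μ p t).deriv

lemma derivOn_domRestrict_fexp (q : ℕ × ℂ) :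
    derivOn ((Ici 0).domRestrict (fexp q)) =
      q.2 • (Ici 0).domRestrict (fexp q) +
        (q.1 : ℂ) • (Ici 0).domRestrict (fexp (q.1 - 1, q.2)) := by
  rw [derivOn_domRestrict (differentiable_fexp q)]
  funext t
  exact (hasDerivAt_fexp q t).deriv

lemma mem_expSet_iff {V : Submodule ℝ (I₀ → ℝ)} {q : ℕ × ℂ} :
    q ∈ expSet V ↔ (Ici 0).domRestrict (fexp q) ∈ complexify V := Iff.rfl

lemma derivOn_mem_complexify {V : Submodule ℝ (I₀ → ℝ)} (hder : ∀ f ∈ V, derOn f ∈ V)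
    {h : I₀ → ℂ} (hh : h ∈ complexify V) (hd : DifferentiableOn ℝ (extend0 h) (Ici 0)) :
    derivOn h ∈ complexify V :=
  ⟨derOn_re hd ▸ hder _ hh.1, derOn_im hd ▸ hder _ hh.2⟩

lemma differentiableOn_extend0_of_mem_complexify (V : Submodule ℝ (I₀ → ℝ))
    (hdiff : ∀ f ∈ V, DifferentiableOn ℝ (ext f) (Ici 0)) {h : I₀ → ℂ} (hh : h ∈ complexify V) :
    DifferentiableOn ℝ (extend0 h) (Ici 0) := by
  have : extend0 h = fun t =>
      (ext (fun s => (h s).re) t : ℂ) + (ext (fun s => (h s).im) t) * Complex.I := by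
    funext t; by_cases ht : t ∈ Ici (0:ℝ) <;> simp [extend0, _root_.ext, ht]
  rw [this]
  exact (Complex.differentiable_ofReal.comp_differentiableOn (hdiff _ hh.1)).add
    ((Complex.differentiable_ofReal.comp_differentiableOn (hdiff _ hh.2)).mul_const _)

lemma forall_derOn_mem_of_span_eq {V : Submodule ℝ (I₀ → ℝ)} {S : Set (I₀ → ℝ)}
    (hdiff : ∀ f ∈ V, DifferentiableOn ℝ (ext f) (Ici 0)) (hV : Submodule.span ℝ S = V)
    (hS : ∀ s ∈ S, derOn s ∈ V) : ∀ f ∈ V, derOn f ∈ V := by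
  subst hV
  intro f hf
  induction hf using Submodule.span_induction with
  | mem s hs => exact hS s hs
  | zero => rw [derOn_eq_derivOn, derivOn_zero]; exact zero_mem _
  | add f g hf hg ihf ihg =>
    rw [derOn_eq_derivOn, derivOn_add (hdiff f hf) (hdiff g hg)]
    exact add_mem ihf ihg
  | smul c f hf ihf =>
    rw [derOn_eq_derivOn, derivOn_smul c (hdiff f hf)]
    exact Submodule.smul_mem _ c ihf

theorem derOn_mem_of_span_reimSet_eq {V : Submodule ℝ (I₀ → ℝ)}
    (hdiff : ∀ f ∈ V, DifferentiableOn ℝ (ext f) (Ici 0)) {Q : Set (ℕ × ℂ)} (hQ : ExpClosed Q)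
    (hV : Submodule.span ℝ (reimSet Q) = V) : ∀ f ∈ V, derOn f ∈ V := by
  have hmem : ∀ q ∈ Q, (Ici 0).domRestrict (fexp q) ∈ complexify V := fun q hq =>
    ⟨hV ▸ Submodule.subset_span ⟨q, hq, .inl rfl⟩, hV ▸ Submodule.subset_span ⟨q, hq, .inr rfl⟩⟩
  have hderiv : ∀ q ∈ Q, derivOn ((Ici 0).domRestrict (fexp q)) ∈ complexify V := fun q hq => by
    rw [derivOn_domRestrict_fexp]
    exact add_mem (Submodule.smul_mem _ _ (hmem q hq)) (Submodule.smul_mem _ _ (hmem _ (hQ q hq).2))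
  refine forall_derOn_mem_of_span_eq hdiff hV ?_
  rintro s ⟨q, hq, rfl | rfl⟩
  · exact derOn_re (differentiableOn_extend0_domRestrict (differentiable_fexp q)) ▸ (hderiv q hq).1
  · exact derOn_im (differentiableOn_extend0_domRestrict (differentiable_fexp q)) ▸ (hderiv q hq).2

lemma conj_fexp (m : ℕ) (μ : ℂ) (t : ℝ) :
    fexp (m, (starRingEnd ℂ) μ) t = (starRingEnd ℂ) (fexp (m, μ) t) := by
  simp [fexp, ← Complex.exp_conj]

lemma expClosed_expSet {V : Submodule ℝ (I₀ → ℝ)} (hder : ∀ f ∈ V, derOn f ∈ V) :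
    ExpClosed (expSet V) := by
  rintro ⟨m, μ⟩ hq
  refine ⟨⟨by simpa [rst, conj_fexp] using hq.1, by
    convert V.neg_mem hq.2 using 1; funext t; simp [rst, conj_fexp]⟩, ?_⟩
  rcases Nat.eq_zero_or_pos m with rfl | hm
  · exact hq
  have hd := derivOn_mem_complexify hder (mem_expSet_iff.1 hq)
    (differentiableOn_extend0_domRestrict (differentiable_fexp _))
  rw [derivOn_domRestrict_fexp] at hd
  have hsmul := sub_mem hd (Submodule.smul_mem _ μ (mem_expSet_iff.1 hq))
  rw [add_sub_cancel_left] at hsmul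
  exact (Submodule.smul_mem_iff _ (by exact_mod_cast hm.ne')).1 hsmul

section DerivEnd

variable (V : Submodule ℝ (I₀ → ℝ)) (hdiff : ∀ f ∈ V, DifferentiableOn ℝ (ext f) (Ici 0))
  (hder : ∀ f ∈ V, derOn f ∈ V)

noncomputable def derivEnd : Module.End ℂ (complexify V) where
  toFun h := ⟨derivOn h, derivOn_mem_complexify hder h.2
    (differentiableOn_extend0_of_mem_complexify V hdiff h.2)⟩
  map_add' h g := Subtype.ext (derivOn_add (differentiableOn_extend0_of_mem_complexify V hdiff h.2)
    (differentiableOn_extend0_of_mem_complexify V hdiff g.2))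
  map_smul' c h := Subtype.ext
    (derivOn_smul c (differentiableOn_extend0_of_mem_complexify V hdiff h.2))

lemma coe_derivEnd_sub_smul_apply (μ : ℂ) (w : complexify V) :
    ((derivEnd V hdiff hder - μ • 1) w : I₀ → ℂ) = derivOn (w : I₀ → ℂ) - μ • (w : I₀ → ℂ) := rfl

lemma coe_derivEnd_sub_smul_pow_apply (μ : ℂ) (p : ℂ[X]) (k : ℕ) (w : complexify V)
    (hw : (w : I₀ → ℂ) = (Ici 0).domRestrict (expPoly μ p)) :
    (((derivEnd V hdiff hder - μ • 1) ^ k) w : I₀ → ℂ) =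
      (Ici 0).domRestrict (expPoly μ (derivative^[k] p)) := by
  induction k with
  | zero => exact hw
  | succ k ih =>
    rw [pow_succ', Module.End.mul_apply, coe_derivEnd_sub_smul_apply, ih,
      derivOn_domRestrict_expPoly, Function.iterate_succ_apply', add_sub_cancel_right]

end DerivEnd

lemma expSet_finite {V : Submodule ℝ (I₀ → ℝ)} [FiniteDimensional ℝ V]
    (hdiff : ∀ f ∈ V, DifferentiableOn ℝ (ext f) (Ici 0)) (hder : ∀ f ∈ V, derOn f ∈ V) :
    (expSet V).Finite := by
  have := finiteDimensional_complexify (V := V)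
  let D := derivEnd V hdiff hder
  refine ((finite_Iio (Module.finrank ℂ (complexify V))).prod D.finite_hasEigenvalue).subset ?_
  rintro ⟨m, μ⟩ hq
  let w : complexify V := ⟨_, mem_expSet_iff.1 hq⟩
  have hpow := fun k => coe_derivEnd_sub_smul_pow_apply V hdiff hder μ (X ^ m) k w
    (by rw [← fexp_eq_expPoly])
  have h1 : ((D - μ • 1) ^ (m + 1)) w = 0 := Subtype.ext <| by
    rw [hpow, iterate_derivative_eq_zero (by simp)]
    funext t; simp [expPoly]
  have h2 : ((D - μ • 1) ^ m) w ≠ 0 := fun h => by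
    have := congrFun (congrArg Subtype.val h) ⟨0, self_mem_Ici⟩
    rw [hpow, iterate_derivative_X_pow_eq_C_mul] at this
    simp [expPoly] at this
  exact ⟨D.lt_finrank_of_pow_apply_eq_zero h1 h2,
    D.hasEigenvalue_of_pow_apply_eq_zero h1 (fun h => h2 (by rw [h, map_zero]))⟩

lemma exists_expPoly_of_pow_apply_eq_zero {V : Submodule ℝ (I₀ → ℝ)}
    (hdiff : ∀ f ∈ V, DifferentiableOn ℝ (ext f) (Ici 0)) (hder : ∀ f ∈ V, derOn f ∈ V)
    (μ : ℂ) {k : ℕ} {w : complexify V} (hw : ((derivEnd V hdiff hder - μ • 1) ^ k) w = 0) :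
    ∃ p : ℂ[X], (w : I₀ → ℂ) = (Ici 0).domRestrict (expPoly μ p) := by
  induction k generalizing w with
  | zero =>
    refine ⟨0, ?_⟩
    rw [pow_zero, Module.End.one_apply] at hw
    rw [hw]
    funext t
    simp [expPoly]
  | succ k ih =>
    obtain ⟨p, hp⟩ := ih (w := (derivEnd V hdiff hder - μ • 1) w)
      (by rwa [← Module.End.mul_apply, ← pow_succ])
    obtain ⟨P, rfl⟩ := p.exists_derivative_eq
    set u : ℝ → ℂ := extend0 (w : I₀ → ℂ) - expPoly μ P
    have hu : ∀ t ∈ Ici (0:ℝ), HasDerivWithinAt u (μ * u t) (Ici 0) t := fun t ht => by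
      have hwt := hasDerivWithinAt_derivOn
        (differentiableOn_extend0_of_mem_complexify V hdiff w.2) ⟨t, ht⟩
      have hNw := congrFun hp ⟨t, ht⟩
      rw [coe_derivEnd_sub_smul_apply] at hNw
      refine (hwt.sub (hasDerivAt_expPoly μ P t).hasDerivWithinAt).congr_deriv ?_
      simp only [Pi.sub_apply, Pi.smul_apply, smul_eq_mul, domRestrict] at hNw
      simp only [u, Pi.sub_apply, extend0, dif_pos ht]
      linear_combination hNw
    refine ⟨P + C (u 0), funext fun t => ?_⟩
    have := eq_mul_cexp_of_hasDerivWithinAt hu t.2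
    rw [show u t = (w : I₀ → ℂ) t - expPoly μ P t by simp [u, extend0_coe]] at this
    simp only [domRestrict, expPoly, eval_add, eval_C] at this ⊢
    linear_combination this

lemma domRestrict_expPoly_mem {S : Submodule ℂ (I₀ → ℂ)} {μ : ℂ} {p : ℂ[X]}
    (h : ∀ m ∈ p.support, (Ici 0).domRestrict (fexp (m, μ)) ∈ S) :
    (Ici 0).domRestrict (expPoly μ p) ∈ S := by
  have : (Ici 0).domRestrict (expPoly μ p) =
      ∑ m ∈ p.support, p.coeff m • (Ici 0).domRestrict (fexp (m, μ)) := by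
    conv_lhs => rw [p.as_sum_support_C_mul_X_pow]
    funext t
    simp [expPoly, fexp, eval_finsetSum, Finset.sum_mul, mul_assoc, domRestrict]
  rw [this]
  exact Submodule.sum_mem _ fun m hm => Submodule.smul_mem _ _ (h m hm)

lemma natDegree_mem_expSet {V : Submodule ℝ (I₀ → ℝ)} (hder : ∀ f ∈ V, derOn f ∈ V) {μ : ℂ}
    {p : ℂ[X]} (hp : p ≠ 0) (hmem : (Ici 0).domRestrict (expPoly μ p) ∈ complexify V) :
    (p.natDegree, μ) ∈ expSet V := by
  obtain ⟨n, hn⟩ : ∃ n, p.natDegree = n := ⟨_, rfl⟩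
  induction n generalizing p with
  | zero =>
    rw [eq_C_of_natDegree_eq_zero hn] at hp hmem
    have hc : p.coeff 0 ≠ 0 := by simpa using hp
    have : (Ici 0).domRestrict (fexp (0, μ)) =
        (p.coeff 0)⁻¹ • (Ici 0).domRestrict (expPoly μ (C (p.coeff 0))) := by
      funext t; simp [fexp, expPoly, hc, domRestrict]
    rw [hn]
    exact mem_expSet_iff.2 (this ▸ Submodule.smul_mem _ _ hmem)
  | succ n ih =>
    have hd : (Ici 0).domRestrict (expPoly μ (derivative p)) ∈ complexify V := by
      have := derivOn_mem_complexify hder hmem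
        (differentiableOn_extend0_domRestrict (differentiable_expPoly μ p))
      rw [derivOn_domRestrict_expPoly] at this
      simpa using sub_mem this (Submodule.smul_mem _ μ hmem)
    have hlow : (n, μ) ∈ expSet V := by
      simpa [hn] using ih (derivative_ne_zero.2 (by omega)) hd (by simp [hn])
    have herase : (Ici 0).domRestrict (expPoly μ p.eraseLead) ∈ complexify V :=
      domRestrict_expPoly_mem fun m hm => (expClosed_expSet hder).mem_of_le hlow <| by
        have := le_natDegree_of_mem_supp m hm
        have := eraseLead_natDegree_le p
        omega
    have hlead : p.leadingCoeff • (Ici 0).domRestrict (fexp (p.natDegree, μ)) ∈ complexify V := by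
      convert sub_mem hmem herase using 1
      funext t
      rw [← self_sub_C_mul_X_pow p]
      simp [expPoly, fexp, domRestrict, -self_sub_C_mul_X_pow]
      ring
    exact mem_expSet_iff.2 ((Submodule.smul_mem_iff _ (leadingCoeff_ne_zero.2 hp)).1 hlead)

lemma complexify_le_span_fexp {V : Submodule ℝ (I₀ → ℝ)} [FiniteDimensional ℝ V]
    (hdiff : ∀ f ∈ V, DifferentiableOn ℝ (ext f) (Ici 0)) (hder : ∀ f ∈ V, derOn f ∈ V) :
    complexify V ≤ Submodule.span ℂ ((fun q => (Ici 0).domRestrict (fexp q)) '' expSet V) := by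
  have := finiteDimensional_complexify (V := V)
  let D := derivEnd V hdiff hder
  intro h hh
  have hmem : (⟨h, hh⟩ : complexify V) ∈ ⨆ μ, D.maxGenEigenspace μ := by
    rw [D.iSup_maxGenEigenspace_eq_top]; trivial
  refine Submodule.iSup_induction _ (motive := fun w : complexify V => (w : I₀ → ℂ) ∈ _) hmem
    ?_ (zero_mem _) (fun _ _ => add_mem)
  intro μ w hw
  obtain ⟨k, hk⟩ := (D.mem_maxGenEigenspace μ w).1 hw
  obtain ⟨p, hp⟩ := exists_expPoly_of_pow_apply_eq_zero hdiff hder μ hk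
  rw [hp]
  exact domRestrict_expPoly_mem fun m hm => Submodule.subset_span ⟨(m, μ),
    (expClosed_expSet hder).mem_of_le (natDegree_mem_expSet hder (by rintro rfl; simp at hm)
      (hp ▸ w.2)) (le_natDegree_of_mem_supp m hm), rfl⟩

lemma span_fexp_le_complexify_span (Q : Set (ℕ × ℂ)) :
    Submodule.span ℂ ((fun q => (Ici 0).domRestrict (fexp q)) '' Q) ≤
      complexify (Submodule.span ℝ (reimSet Q)) :=
  Submodule.span_le.2 <| by
    rintro _ ⟨q, hq, rfl⟩
    exact ⟨Submodule.subset_span ⟨q, hq, .inl rfl⟩, Submodule.subset_span ⟨q, hq, .inr rfl⟩⟩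

theorem span_reimSet_expSet_eq {V : Submodule ℝ (I₀ → ℝ)} [FiniteDimensional ℝ V]
    (hdiff : ∀ f ∈ V, DifferentiableOn ℝ (ext f) (Ici 0)) (hder : ∀ f ∈ V, derOn f ∈ V) :
    Submodule.span ℝ (reimSet (expSet V)) = V := by
  refine le_antisymm (Submodule.span_le.2 ?_) fun f hf => ?_
  · rintro _ ⟨q, hq, rfl | rfl⟩
    exacts [hq.1, hq.2]
  · exact (span_fexp_le_complexify_span _
      (complexify_le_span_fexp hdiff hder (ofReal_comp_mem_complexify hf))).1

/-- **Lemma 3.2(b).**  Let `V` be a finite-dimensional space of differentiable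
functions `[0,∞) → ℝ`.  (a) If `V` is spanned by `{Re f^q, Im f^q : q ∈ Q}` for a
finite closed set of exponents `Q`, then `V` is closed under differentiation.
(b) Conversely, if `V` is closed under differentiation, then
`Q = {q : Re f^q, Im f^q ∈ V}` is a finite closed set of exponents and
`{Re f^q, Im f^q : q ∈ Q}` spans `V`. -/
theorem closed_under_differentiation_iff_spanned_by_exponents
    (V : Submodule ℝ (↥(Set.Ici (0:ℝ)) → ℝ)) (hfin : FiniteDimensional ℝ V)
    (hdiff : ∀ f ∈ V, DifferentiableOn ℝ (ext f) (Set.Ici 0)) :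
    ((∀ Q : Set (ℕ × ℂ), Q.Finite → ExpClosed Q →
        Submodule.span ℝ (reimSet Q) = V → ∀ f ∈ V, derOn f ∈ V) ∧
     ((∀ f ∈ V, derOn f ∈ V) →
        (expSet V).Finite ∧ ExpClosed (expSet V) ∧
          Submodule.span ℝ (reimSet (expSet V)) = V)) :=
  ⟨fun _ _ hQ hV => derOn_mem_of_span_reimSet_eq hdiff hQ hV, fun hder =>
    ⟨expSet_finite hdiff hder, expClosed_expSet hder, span_reimSet_expSet_eq hdiff hder⟩⟩
end

section
/- For each positive integer R define the polynomials P_R(M) = Σ_{k=0}^R M^k/(k!·(2R−2k)!) and P̃_R(M) = Σ_{k=0}^R M^k/(k!·(2^{R−k}·(R−k)!)²). Then: (a) for every real M ≥ 0, P_R(M) > 0 and P̃_R(M) > 0; (b) for every positive integer R there exist real numbers M < 0 and M̃ < 0 such that P_R(M) < 0 and P̃_R(M̃) < 0. -/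
/-!
For `M ≥ 0` both sums are positive termwise. For the sign change write `P(M) = ∑ M^k / d_k`
and reverse it: if `P ≥ 0` on `(-∞, 0)`, then `q(u) = u^R P(-1/u) = ∑ (-1)^k u^(R-k) / d_k`
is nonnegative on `(0, ∞)` and `q(0) = (-1)^R / d_R ≠ 0`, so `∫_0^∞ q w > 0` for every
positive weight `w`. Choosing for `w` a Gamma density whose moments satisfy
`m_{R-k} / d_k ∝ 1 / (k! (R-k)!)` makes this integral the alternating binomial sum
`(1 - 1)^R / R! = 0`. For `P_R` the weight is `u^(-1/2) e^(-u/4)`, with moments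
`2√π (2j)! / j!`; for `P̃_R` it is `e^(-u/4)`, with moments `4^(j+1) j!`.
-/

open Finset MeasureTheory Real Topology
open scoped Nat

theorem Nat.factorial_two_mul_eq_doubleFactorial_mul (n : ℕ) :
    (2 * n)! = (2 * n)‼ * (2 * n - 1)‼ := by
  rcases n with _ | n
  · rfl
  · simpa [Nat.mul_succ] using Nat.factorial_eq_mul_doubleFactorial (2 * n + 1)

theorem Real.Gamma_nat_add_half_eq_factorial (n : ℕ) :
    Gamma (n + 1 / 2) = (2 * n)! * √π / (4 ^ n * n !) := by
  rw [Gamma_nat_add_half, Nat.factorial_two_mul_eq_doubleFactorial_mul,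
    Nat.doubleFactorial_two_mul]
  push_cast
  rw [show (4 : ℝ) ^ n = 2 ^ n * 2 ^ n by rw [← mul_pow]; norm_num]
  field_simp

theorem sum_range_neg_one_pow_div_factorial_mul_factorial {R : ℕ} (hR : R ≠ 0) :
    ∑ k ∈ range (R + 1), (-1 : ℝ) ^ k / (k ! * (R - k)!) = 0 := by
  have hchoose : ∀ k ∈ range (R + 1), (-1 : ℝ) ^ k / (k ! * (R - k)!)
      = (-1) ^ k * R.choose k / R ! := by
    intro k hk
    rw [Nat.cast_choose ℝ (Nat.lt_succ_iff.mp (mem_range.mp hk))]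
    field_simp
  have halt : ∑ k ∈ range (R + 1), (-1 : ℝ) ^ k * R.choose k = 0 := by
    exact_mod_cast Int.alternating_sum_range_choose_of_ne hR
  rw [sum_congr rfl hchoose, ← sum_div, halt, zero_div]

theorem sum_range_pow_div_pos {d : ℕ → ℝ} (hd : ∀ k, 0 < d k) {M : ℝ} (hM : 0 ≤ M)
    (R : ℕ) :
    0 < ∑ k ∈ range (R + 1), M ^ k / d k :=
  sum_pos' (fun k _ => div_nonneg (pow_nonneg hM k) (hd k).le)
    ⟨0, mem_range.mpr R.succ_pos, by simpa using hd 0⟩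

theorem pow_mul_rpow_sub_one {u : ℝ} (hu : 0 < u) (j : ℕ) (s : ℝ) :
    u ^ j * u ^ (s - 1) = u ^ (j + s - 1) := by
  rw [← rpow_natCast, ← rpow_add hu, add_sub_assoc]

theorem integrableOn_pow_mul_rpow_mul_exp_neg_mul (j : ℕ) {s r : ℝ} (hs : 0 < s) (hr : 0 < r) :
    IntegrableOn (fun u => u ^ j * (u ^ (s - 1) * exp (-(r * u)))) (Set.Ioi 0) := by
  have hexp : -1 < (j + s - 1 : ℝ) := by linarith [j.cast_nonneg (α := ℝ)]
  refine (integrableOn_rpow_mul_exp_neg_mul_rpow hexp one_pos hr).congr_fun (fun u hu => ?_)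
    measurableSet_Ioi
  simp only [rpow_one, neg_mul, ← mul_assoc, pow_mul_rpow_sub_one hu]

theorem integral_pow_mul_rpow_mul_exp_neg_mul_Ioi (j : ℕ) {s r : ℝ} (hs : 0 < s) (hr : 0 < r) :
    ∫ u in Set.Ioi 0, u ^ j * (u ^ (s - 1) * exp (-(r * u)))
      = (1 / r) ^ (j + s) * Gamma (j + s) := by
  rw [← integral_rpow_mul_exp_neg_mul_Ioi (by positivity) hr]
  refine setIntegral_congr_fun measurableSet_Ioi (fun u hu => ?_)
  simp only [← mul_assoc, pow_mul_rpow_sub_one hu]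

theorem setIntegral_Ioi_mul_pos {f w : ℝ → ℝ} (hf : Continuous f) (hf0 : f 0 ≠ 0)
    (hf_nonneg : ∀ u ∈ Set.Ioi 0, 0 ≤ f u) (hw : ∀ u ∈ Set.Ioi 0, 0 < w u)
    (hint : IntegrableOn (fun u => f u * w u) (Set.Ioi 0)) :
    0 < ∫ u in Set.Ioi 0, f u * w u := by
  rw [setIntegral_pos_iff_support_of_nonneg_ae ((ae_restrict_iff' measurableSet_Ioi).2
    (ae_of_all _ fun u hu => mul_nonneg (hf_nonneg u hu) (hw u hu).le)) hint]
  have hopen : IsOpen ({u | f u ≠ 0} ∩ Set.Ioi 0) :=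
    (isOpen_ne_fun hf continuous_const).inter isOpen_Ioi
  have hnear : ∀ᶠ u in 𝓝[>] 0, f u ≠ 0 ∧ u ∈ Set.Ioi 0 :=
    ((hf.continuousAt.eventually_ne hf0).filter_mono nhdsWithin_le_nhds).and self_mem_nhdsWithin
  have hne : ({u | f u ≠ 0} ∩ Set.Ioi 0).Nonempty := hnear.exists
  refine (hopen.measure_pos volume hne).trans_le (measure_mono fun u ⟨hfu, hu⟩ => ⟨?_, hu⟩)
  exact mul_ne_zero hfu (hw u hu).ne'

theorem pow_mul_sum_neg_inv_pow_div {u : ℝ} (hu : u ≠ 0) (R : ℕ) (d : ℕ → ℝ) :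
    u ^ R * ∑ k ∈ range (R + 1), (-u⁻¹) ^ k / d k
      = ∑ k ∈ range (R + 1), (-1) ^ k / d k * u ^ (R - k) := by
  rw [mul_sum]
  refine sum_congr rfl fun k hk => ?_
  rw [← Nat.sub_add_cancel (Nat.lt_succ_iff.mp (mem_range.mp hk)), pow_add, neg_pow, inv_pow,
    Nat.add_sub_cancel]
  field_simp

theorem exists_neg_sum_pow_div_neg_of_moment_sum_eq_zero {R : ℕ} {d : ℕ → ℝ}
    (hd : d R ≠ 0) {w : ℝ → ℝ} (hw : ∀ u ∈ Set.Ioi 0, 0 < w u)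
    (hint : ∀ j, IntegrableOn (fun u => u ^ j * w u) (Set.Ioi 0))
    (hsum : ∑ k ∈ range (R + 1), (-1) ^ k * (∫ u in Set.Ioi 0, u ^ (R - k) * w u) / d k = 0) :
    ∃ M < 0, ∑ k ∈ range (R + 1), M ^ k / d k < 0 := by
  by_contra! hP
  obtain ⟨q, hq⟩ :
      ∃ q : ℝ → ℝ, ∀ u, q u = ∑ k ∈ range (R + 1), (-1) ^ k / d k * u ^ (R - k) :=
    ⟨_, fun _ => rfl⟩
  have hq_nonneg : ∀ u ∈ Set.Ioi 0, 0 ≤ q u := fun u (hu : 0 < u) => by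
    rw [hq, ← pow_mul_sum_neg_inv_pow_div hu.ne']
    exact mul_nonneg (pow_nonneg hu.le R) (hP _ (neg_lt_zero.mpr (inv_pos.mpr hu)))
  have hq0 : q 0 = (-1) ^ R / d R := by
    rw [hq, sum_range_succ, sum_eq_zero fun k hk => ?_]
    · simp
    · simp [Nat.sub_ne_zero_of_lt (mem_range.mp hk)]
  have hqw : (fun u => q u * w u)
      = fun u => ∑ k ∈ range (R + 1), (-1) ^ k / d k * (u ^ (R - k) * w u) := by
    ext u
    simp only [hq, sum_mul, mul_assoc]
  have hint_q : IntegrableOn (fun u => q u * w u) (Set.Ioi 0) := by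
    rw [hqw]
    exact integrable_finsetSum _ fun k _ => (hint _).const_mul _
  have hq_int : ∫ u in Set.Ioi 0, q u * w u = 0 := by
    rw [hqw, integral_finsetSum _ fun k _ => (hint _).const_mul _]
    refine (sum_congr rfl fun k _ => ?_).trans hsum
    rw [integral_const_mul]
    ring
  refine (setIntegral_Ioi_mul_pos ?_ ?_ hq_nonneg hw hint_q).ne' hq_int
  · simp only [funext hq]
    fun_prop
  · rw [hq0]
    exact div_ne_zero (pow_ne_zero _ (by norm_num)) hd

theorem integral_pow_mul_rpow_neg_half_mul_exp_neg_quarter_mul (j : ℕ) :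
    ∫ u in Set.Ioi 0, u ^ j * (u ^ ((1 / 2 : ℝ) - 1) * exp (-(1 / 4 * u)))
      = 2 * √π * (2 * j)! / j ! := by
  rw [integral_pow_mul_rpow_mul_exp_neg_mul_Ioi j (by norm_num) (by norm_num),
    Gamma_nat_add_half_eq_factorial, one_div_one_div, rpow_add (by norm_num), rpow_natCast,
    show (4 : ℝ) ^ (1 / 2 : ℝ) = 2 by
      rw [← sqrt_eq_rpow, show (4 : ℝ) = 2 ^ 2 by norm_num, sqrt_sq two_pos.le]]
  field_simp

theorem integral_pow_mul_exp_neg_quarter_mul (j : ℕ) :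
    ∫ u in Set.Ioi 0, u ^ j * (u ^ ((1 : ℝ) - 1) * exp (-(1 / 4 * u)))
      = 4 ^ (j + 1) * j ! := by
  rw [integral_pow_mul_rpow_mul_exp_neg_mul_Ioi j one_pos (by norm_num), Gamma_nat_eq_factorial,
    one_div_one_div, ← Nat.cast_succ, rpow_natCast]

/-- **Lemma 3.7.**  For each positive integer `R` define
`P_R(M) = ∑_{k=0}^R M^k / (k! (2R−2k)!)` and
`P̃_R(M) = ∑_{k=0}^R M^k / (k! (2^{R−k} (R−k)!)²)`.
Then `P_R(M) > 0` and `P̃_R(M) > 0` for every `M ≥ 0`, and there exist negative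
reals `M`, `M̃` with `P_R(M) < 0` and `P̃_R(M̃) < 0`. -/
theorem sphere_average_polynomials (R : ℕ) (hR : 0 < R) :
    (∀ M : ℝ, 0 ≤ M →
      0 < ∑ k ∈ Finset.range (R + 1),
            M ^ k / ((k.factorial : ℝ) * ((2 * R - 2 * k).factorial : ℝ)) ∧
      0 < ∑ k ∈ Finset.range (R + 1),
            M ^ k / ((k.factorial : ℝ) *
              ((2 : ℝ) ^ (R - k) * ((R - k).factorial : ℝ)) ^ 2)) ∧
    (∃ M : ℝ, M < 0 ∧
      (∑ k ∈ Finset.range (R + 1),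
        M ^ k / ((k.factorial : ℝ) * ((2 * R - 2 * k).factorial : ℝ))) < 0) ∧
    (∃ M : ℝ, M < 0 ∧
      (∑ k ∈ Finset.range (R + 1),
        M ^ k / ((k.factorial : ℝ) *
          ((2 : ℝ) ^ (R - k) * ((R - k).factorial : ℝ)) ^ 2)) < 0) := by
  refine ⟨fun M hM => ⟨sum_range_pow_div_pos (fun k => by positivity) hM R,
    sum_range_pow_div_pos (fun k => by positivity) hM R⟩, ?_, ?_⟩
  · refine exists_neg_sum_pow_div_neg_of_moment_sum_eq_zero (by positivity)
      (w := fun u => u ^ ((1 / 2 : ℝ) - 1) * exp (-(1 / 4 * u)))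
      (fun u (hu : 0 < u) => by positivity)
      (fun j => integrableOn_pow_mul_rpow_mul_exp_neg_mul j (by norm_num) (by norm_num)) ?_
    calc _ = 2 * √π * ∑ k ∈ range (R + 1), (-1 : ℝ) ^ k / (k ! * (R - k)!) := by
          rw [mul_sum]
          refine sum_congr rfl fun k _ => ?_
          rw [integral_pow_mul_rpow_neg_half_mul_exp_neg_quarter_mul,
            show 2 * R - 2 * k = 2 * (R - k) by omega]
          field_simp
      _ = 0 := by rw [sum_range_neg_one_pow_div_factorial_mul_factorial hR.ne', mul_zero]
  · refine exists_neg_sum_pow_div_neg_of_moment_sum_eq_zero (by positivity)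
      (w := fun u => u ^ ((1 : ℝ) - 1) * exp (-(1 / 4 * u)))
      (fun u (hu : 0 < u) => by positivity)
      (fun j => integrableOn_pow_mul_rpow_mul_exp_neg_mul j one_pos (by norm_num)) ?_
    calc _ = 4 * ∑ k ∈ range (R + 1), (-1 : ℝ) ^ k / (k ! * (R - k)!) := by
          rw [mul_sum]
          refine sum_congr rfl fun k _ => ?_
          rw [integral_pow_mul_exp_neg_quarter_mul, mul_pow, ← pow_mul, mul_comm (R - k) 2,
            pow_mul]
          field_simp
          ring
      _ = 0 := by rw [sum_range_neg_one_pow_div_factorial_mul_factorial hR.ne', mul_zero]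
end
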